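/- arXiv:1109.3678 — 6 statements merged into one kernel-verified Lean document; each statement's English description precedes it below -/
import Mathlib

section
/- Let ℓ:(0,2)→(0,∞) be measurable, slowly varying at 0, and bounded away from 0 and ∞ on every compact subinterval of (0,2), and let β₂ > 1. Then ∫_r^1 u^{-β₂} ℓ(u) du is asymptotically equivalent to r^{1-β₂} ℓ(r)/(β₂-1) as r → 0+, i.e. the quotient of the two expressions tends to 1 as r → 0+. -/
/-!
Substituting `u = t r` turns the quotient into `(β₂ - 1) ∫_1^{1/r} t^{-β₂} ℓ(t r) / ℓ(r) dt`.
The integrand tends to `t^{-β₂}` by slow variation, and Potter's bound `ℓ(u) ≤ K (u/r)^ε ℓ(r)`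
(for `r ≤ u ≤ 1`, `r` small) dominates it by `K t^{ε - β₂}`, which is integrable on `(1, ∞)` once
`ε < β₂ - 1`; dominated convergence gives the limit `(β₂ - 1) ∫_1^∞ t^{-β₂} dt = 1`.

Near `0`, Potter's bound is the uniform convergence theorem for the measurable function
`h(x) = log ℓ(e^{-x})`, whose increments `h(x + c) - h(x)` tend to `0` for each `c`. Uniformity in
`c ∈ [0, 1]` comes from Egorov's theorem: the shifts `t ∈ [0, 2]` that are good for `x` and for
`x + c` both fill more than half of `[0, 2]`, so some `t` and `t + c` are good simultaneously.
Away from `0` the bound follows from the boundedness of `ℓ` on `[δ, 1]`.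
-/

open MeasureTheory Topology Filter Set Real

theorem exists_mem_and_add_mem_of_volume_diff_lt {A : Set ℝ}
    (hA : volume (Icc 0 2 \ A) < 2⁻¹) {c : ℝ} (hc : c ∈ Icc (0 : ℝ) 1) :
    ∃ t ∈ Icc (0 : ℝ) 1, t ∈ A ∧ t + c ∈ A := by
  by_contra! H
  have hcover : Icc (0 : ℝ) 1 ⊆ (Icc 0 2 \ A) ∪ (· + c) ⁻¹' (Icc 0 2 \ A) := by
    intro t ht
    by_cases htA : t ∈ A
    · exact .inr ⟨⟨by linarith [ht.1, hc.1], by linarith [ht.2, hc.2]⟩, H t ht htA⟩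
    · exact .inl ⟨⟨ht.1, by linarith [ht.2]⟩, htA⟩
  have hlt : volume (Icc (0 : ℝ) 1) < 2⁻¹ + 2⁻¹ := calc
    volume (Icc (0 : ℝ) 1) ≤ volume (Icc 0 2 \ A) + volume ((· + c) ⁻¹' (Icc 0 2 \ A)) :=
        (measure_mono hcover).trans (measure_union_le _ _)
    _ < 2⁻¹ + 2⁻¹ := by rw [measure_preimage_add_right]; exact ENNReal.add_lt_add hA hA
  simp [ENNReal.inv_two_add_inv_two] at hlt

theorem Measurable.tendstoUniformlyOn_add_sub {h : ℝ → ℝ} (hm : Measurable h)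
    (hsl : ∀ c, Tendsto (fun x => h (x + c) - h x) atTop (𝓝 0)) :
    TendstoUniformlyOn (fun x c => h (x + c) - h x) 0 atTop (Icc 0 1) := by
  have egorov : ∀ y : ℕ → ℝ, Tendsto y atTop atTop → ∃ T ⊆ Icc (0 : ℝ) 2,
      volume T ≤ ENNReal.ofReal 5⁻¹ ∧
      TendstoUniformlyOn (fun n t => h (y n + t) - h (y n)) 0 atTop (Icc 0 2 \ T) := by
    intro y hy
    obtain ⟨T, hT, -, hvol, hunif⟩ := tendstoUniformlyOn_of_ae_tendsto (μ := volume)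
      (g := 0) (fun n => ((hm.comp (measurable_const_add _)).sub_const _).stronglyMeasurable)
      stronglyMeasurable_const measurableSet_Icc measure_Icc_lt_top.ne
      (.of_forall fun t _ => (hsl t).comp hy) (by norm_num : (0 : ℝ) < 5⁻¹)
    exact ⟨T, hT, hvol, hunif⟩
  rw [Metric.tendstoUniformlyOn_iff]
  intro ε hε
  by_contra hcon
  rw [not_eventually, frequently_atTop] at hcon
  push Not at hcon
  choose x hx c hc hbig using fun n : ℕ => hcon n
  have hxtop : Tendsto x atTop atTop := tendsto_atTop_mono hx tendsto_natCast_atTop_atTop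
  obtain ⟨T, hT, hTvol, hTunif⟩ := egorov x hxtop
  obtain ⟨T', hT', hT'vol, hT'unif⟩ := egorov (fun n => x n + c n)
    (tendsto_atTop_mono (fun n => le_add_of_nonneg_right (hc n).1) hxtop)
  set A := Icc (0 : ℝ) 2 \ (T ∪ T')
  have hAvol : volume (Icc 0 2 \ A) < 2⁻¹ := calc
    volume (Icc 0 2 \ A) ≤ volume T + volume T' :=
      (measure_mono (sdiff_sdiff_cancel_left (union_subset hT hT')).le).trans
        (measure_union_le _ _)
    _ ≤ ENNReal.ofReal 5⁻¹ + ENNReal.ofReal 5⁻¹ := add_le_add hTvol hT'vol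
    _ < ENNReal.ofReal 2⁻¹ := by
      rw [← ENNReal.ofReal_add (by norm_num) (by norm_num)]
      exact ENNReal.ofReal_lt_ofReal_iff'.mpr ⟨by norm_num, by norm_num⟩
    _ = 2⁻¹ := by rw [ENNReal.ofReal_inv_of_pos two_pos, ENNReal.ofReal_ofNat]
  have hA : A ⊆ Icc 0 2 \ T := sdiff_subset_sdiff_right subset_union_left
  have hA' : A ⊆ Icc 0 2 \ T' := sdiff_subset_sdiff_right subset_union_right
  obtain ⟨n, hn, hn'⟩ := ((Metric.tendstoUniformlyOn_iff.mp (hTunif.mono hA) _ (half_pos hε)).and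
    (Metric.tendstoUniformlyOn_iff.mp (hT'unif.mono hA') _ (half_pos hε))).exists
  obtain ⟨t, -, htA, htcA⟩ := exists_mem_and_add_mem_of_volume_diff_lt hAvol (hc n)
  have h1 := hn _ htcA
  have h2 := hn' _ htA
  have h3 := hbig n
  simp only [Pi.zero_apply, dist_zero_left, Real.norm_eq_abs, ← add_assoc,
    add_right_comm (x n) t] at h1 h2 h3
  linarith [abs_sub_le (h (x n + c n)) (h (x n + c n + t)) (h (x n)),
    abs_sub_comm (h (x n + c n)) (h (x n + c n + t))]

theorem Measurable.exists_abs_add_sub_le {h : ℝ → ℝ} (hm : Measurable h)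
    (hsl : ∀ c, Tendsto (fun x => h (x + c) - h x) atTop (𝓝 0)) {ε : ℝ} (hε : 0 < ε) :
    ∃ X, ∀ x ≥ X, ∀ c ≥ 0, |h (x + c) - h x| ≤ ε * (1 + c) := by
  obtain ⟨X, hX⟩ := eventually_atTop.mp
    (Metric.tendstoUniformlyOn_iff.mp (hm.tendstoUniformlyOn_add_sub hsl) ε hε)
  have hstep : ∀ x ≥ X, ∀ c ∈ Icc (0 : ℝ) 1, |h (x + c) - h x| ≤ ε := fun x hx c hc => by
    simpa only [Pi.zero_apply, dist_zero_left, Real.norm_eq_abs] using (hX x hx c hc).le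
  have hsteps : ∀ n : ℕ, ∀ x ≥ X, ∀ c : ℝ, 0 ≤ c → c ≤ n + 1 → |h (x + c) - h x| ≤ (n + 1) * ε := by
    intro n
    induction n with
    | zero => intro x hx c hc0 hc1; simpa using hstep x hx c ⟨hc0, by simpa using hc1⟩
    | succ n ih =>
      intro x hx c hc0 hc1
      rcases le_or_gt c 1 with hc | hc
      · nlinarith [hstep x hx c ⟨hc0, hc⟩]
      · have h1 := ih (x + 1) (by linarith) (c - 1) (by linarith) (by push_cast at hc1; linarith)
        rw [add_add_sub_cancel] at h1
        push_cast
        linarith [abs_sub_le (h (x + c)) (h (x + 1)) (h x), hstep x hx 1 ⟨zero_le_one, le_rfl⟩]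
  refine ⟨X, fun x hx c hc => (hsteps ⌊c⌋₊ x hx c hc (Nat.lt_floor_add_one c).le).trans ?_⟩
  nlinarith [Nat.floor_le hc]

theorem integral_Ioo_eq_smul_integral_Ioo_comp_mul {E : Type*} [NormedAddCommGroup E]
    [NormedSpace ℝ E] (f : ℝ → E) {a b c : ℝ} (hab : a ≤ b) (hc : 0 < c) :
    ∫ u in Ioo a b, f u = c • ∫ t in Ioo (a / c) (b / c), f (t * c) := by
  rw [← integral_Ioc_eq_integral_Ioo, ← integral_Ioc_eq_integral_Ioo,
    ← intervalIntegral.integral_of_le hab,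
    ← intervalIntegral.integral_of_le (div_le_div_of_nonneg_right hab hc.le),
    intervalIntegral.smul_integral_comp_mul_right, div_mul_cancel₀ _ hc.ne',
    div_mul_cancel₀ _ hc.ne']

theorem integral_Ioo_rpow_mul_eq (ℓ : ℝ → ℝ) (β : ℝ) {r : ℝ} (hr0 : 0 < r) (hr1 : r ≤ 1)
    (hℓr : ℓ r ≠ 0) :
    ∫ u in Ioo r 1, u ^ (-β) * ℓ u =
      r ^ (1 - β) * ℓ r * ∫ t in Ioo 1 r⁻¹, t ^ (-β) * (ℓ (t * r) / ℓ r) := by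
  rw [integral_Ioo_eq_smul_integral_Ioo_comp_mul _ hr1 hr0, div_self hr0.ne', one_div,
    smul_eq_mul, ← integral_const_mul, ← integral_const_mul]
  refine setIntegral_congr_fun measurableSet_Ioo fun t ht => ?_
  have ht0 : 0 ≤ t := zero_le_one.trans ht.1.le
  rw [mul_rpow ht0 hr0.le, sub_eq_add_neg, rpow_add hr0, rpow_one]
  field_simp

def SlowlyVaryingAtZero (ℓ : ℝ → ℝ) : Prop :=
  ∀ lam : ℝ, 0 < lam → Tendsto (fun r => ℓ (lam * r) / ℓ r) (𝓝[>] 0) (𝓝 1)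

namespace SlowlyVaryingAtZero

variable {ℓ : ℝ → ℝ}

theorem tendsto_log_comp_exp_neg_add_sub (hℓ : SlowlyVaryingAtZero ℓ)
    (hpos : ∀ᶠ t in 𝓝[>] 0, 0 < ℓ t) (c : ℝ) :
    Tendsto (fun x => log (ℓ (exp (-(x + c)))) - log (ℓ (exp (-x)))) atTop (𝓝 0) := by
  have hexp : Tendsto (fun x => exp (-x)) atTop (𝓝[>] 0) :=
    tendsto_exp_atBot_nhdsGT.comp tendsto_neg_atTop_atBot
  have hlog := ((continuousAt_log one_ne_zero).tendsto.comp
    ((hℓ (exp (-c)) (exp_pos _)).comp hexp))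
  rw [log_one] at hlog
  refine hlog.congr' ?_
  filter_upwards [hexp.eventually hpos,
    (hexp.comp (tendsto_atTop_add_const_right _ c tendsto_id)).eventually hpos] with x hx hxc
  simp only [Function.comp_apply, id] at hxc ⊢
  rw [← exp_add, ← neg_add, add_comm c x, log_div hxc.ne' hx.ne']

theorem exists_le_mul_rpow (hℓ : SlowlyVaryingAtZero ℓ) (hmeas : Measurable ℓ)
    (hpos : ∀ᶠ t in 𝓝[>] 0, 0 < ℓ t) {ε : ℝ} (hε : 0 < ε) :
    ∃ δ > 0, ∀ r u, 0 < r → r ≤ u → u ≤ δ → ℓ u ≤ exp ε * (u / r) ^ ε * ℓ r := by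
  have hexp : Tendsto (fun x => exp (-x)) atTop (𝓝[>] 0) :=
    tendsto_exp_atBot_nhdsGT.comp tendsto_neg_atTop_atBot
  obtain ⟨X₀, hX₀⟩ := eventually_atTop.mp (hexp.eventually hpos)
  obtain ⟨X, hX⟩ := Measurable.exists_abs_add_sub_le (h := fun x => log (ℓ (exp (-x))))
    (by fun_prop) (hℓ.tendsto_log_comp_exp_neg_add_sub hpos) hε
  refine ⟨exp (-max X X₀), exp_pos _, fun r u hr hru hu => ?_⟩
  have hu0 : 0 < u := hr.trans_le hru
  have hxX : max X X₀ ≤ -log u := by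
    rw [le_neg, ← exp_le_exp, exp_log hu0]; exact hu
  have hbound := hX (-log u) (le_of_max_le_left hxX) (log u - log r)
    (sub_nonneg.mpr (log_le_log hr hru))
  have hℓu := hX₀ (-log u) (le_of_max_le_right hxX)
  rw [show -log u + (log u - log r) = -log r by ring, neg_neg, neg_neg, exp_log hr,
    exp_log hu0] at hbound
  rw [neg_neg, exp_log hu0] at hℓu
  have hℓr := hX₀ (-log r) (by linarith [le_of_max_le_right hxX, log_le_log hr hru])
  rw [neg_neg, exp_log hr] at hℓr
  calc ℓ u = exp (log (ℓ u)) := (exp_log hℓu).symm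
    _ ≤ exp (ε + (log u - log r) * ε + log (ℓ r)) :=
        exp_le_exp.mpr (by linarith [neg_abs_le (log (ℓ r) - log (ℓ u))])
    _ = exp ε * (u / r) ^ ε * ℓ r := by
        rw [exp_add, exp_add, rpow_def_of_pos (div_pos hu0 hr), log_div hu0.ne' hr.ne',
          exp_log hℓr]

theorem exists_le_mul_rpow_of_bddAbove (hℓ : SlowlyVaryingAtZero ℓ) (hmeas : Measurable ℓ)
    (hpos : ∀ t ∈ Ioc 0 1, 0 < ℓ t) (hbdd : ∀ δ > 0, BddAbove (ℓ '' Icc δ 1))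
    {ε : ℝ} (hε : 0 < ε) :
    ∃ K > 0, ∃ δ > 0, ∀ r u, 0 < r → r ≤ δ → r ≤ u → u ≤ 1 → ℓ u ≤ K * (u / r) ^ ε * ℓ r := by
  obtain ⟨δ₀, hδ₀, hpotter⟩ := hℓ.exists_le_mul_rpow hmeas
    (mem_of_superset (Ioc_mem_nhdsGT one_pos) hpos) hε
  set δ := min δ₀ 1
  have hδ : 0 < δ := lt_min hδ₀ one_pos
  have hℓδ : 0 < ℓ δ := hpos δ ⟨hδ, min_le_right _ _⟩
  obtain ⟨M, hM⟩ := hbdd δ hδ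
  set B := max 1 (M / ℓ δ)
  have hcap : ∀ u ∈ Ioc 0 1, ℓ u ≤ B * ℓ (min u δ) := by
    rintro u ⟨hu0, hu1⟩
    rcases le_total u δ with hu | hu
    · rw [min_eq_left hu]
      exact le_mul_of_one_le_left (hpos u ⟨hu0, hu1⟩).le (le_max_left _ _)
    · rw [min_eq_right hu]
      calc ℓ u ≤ M := hM (mem_image_of_mem ℓ ⟨hu, hu1⟩)
        _ = M / ℓ δ * ℓ δ := (div_mul_cancel₀ _ hℓδ.ne').symm
        _ ≤ B * ℓ δ := by gcongr; exact le_max_right _ _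
  refine ⟨B * exp ε, by positivity, δ, hδ, fun r u hr hrδ hru hu1 => ?_⟩
  have hB : 0 ≤ B := zero_le_one.trans (le_max_left _ _)
  have hℓr : 0 < ℓ r := hpos r ⟨hr, hrδ.trans (min_le_right _ _)⟩
  have hmin : r ≤ min u δ := le_min hru hrδ
  calc ℓ u ≤ B * ℓ (min u δ) := hcap u ⟨hr.trans_le hru, hu1⟩
    _ ≤ B * (exp ε * (min u δ / r) ^ ε * ℓ r) := mul_le_mul_of_nonneg_left
        (hpotter r _ hr hmin ((min_le_right _ _).trans (min_le_left _ _))) hB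
    _ ≤ B * (exp ε * (u / r) ^ ε * ℓ r) := by
        have : 0 ≤ min u δ / r := div_nonneg (hr.le.trans hmin) hr.le
        gcongr
        exact min_le_left _ _
    _ = B * exp ε * (u / r) ^ ε * ℓ r := by ring

theorem tendsto_integral_Ioo_rpow_mul_div (hℓ : SlowlyVaryingAtZero ℓ) (hmeas : Measurable ℓ)
    (hpos : ∀ t ∈ Ioc 0 1, 0 < ℓ t) (hbdd : ∀ δ > 0, BddAbove (ℓ '' Icc δ 1))
    {β : ℝ} (hβ : 1 < β) :
    Tendsto (fun r => ∫ t in Ioo 1 r⁻¹, t ^ (-β) * (ℓ (t * r) / ℓ r)) (𝓝[>] 0)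
      (𝓝 (β - 1)⁻¹) := by
  obtain ⟨K, hK, δ, hδ, hbound⟩ := hℓ.exists_le_mul_rpow_of_bddAbove hmeas hpos hbdd
    (ε := (β - 1) / 2) (by linarith)
  set F : ℝ → ℝ → ℝ := fun r => (Iio r⁻¹).indicator fun t => t ^ (-β) * (ℓ (t * r) / ℓ r)
  have hF : ∀ r, ∫ t in Ioo 1 r⁻¹, t ^ (-β) * (ℓ (t * r) / ℓ r) = ∫ t in Ioi 1, F r t := by
    intro r
    rw [setIntegral_indicator measurableSet_Iio, Ioi_inter_Iio]
  have hlimit : ∫ t in Ioi 1, t ^ (-β) = (β - 1)⁻¹ := by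
    rw [integral_Ioi_rpow_of_lt (by linarith) one_pos, one_rpow, neg_div, ← div_neg, neg_add',
      neg_neg, one_div]
  simp_rw [hF, ← hlimit]
  refine tendsto_integral_filter_of_dominated_convergence (fun t => K * t ^ ((β - 1) / 2 - β)) ?_ ?_
    ((integrableOn_Ioi_rpow_of_lt (by linarith) one_pos).const_mul K) ?_
  · refine .of_forall fun r => (Measurable.indicator ?_ measurableSet_Iio).aestronglyMeasurable
    fun_prop
  · filter_upwards [Ioc_mem_nhdsGT hδ] with r ⟨hr0, hrδ⟩
    refine ae_restrict_of_forall_mem measurableSet_Ioi fun t (ht : 1 < t) => ?_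
    have ht0 : 0 < t := one_pos.trans ht
    by_cases htr : t < r⁻¹
    · have htr1 : t * r ≤ 1 := by
        simpa [hr0.ne'] using (mul_lt_mul_of_pos_right htr hr0).le
      have hℓtr := hbound r (t * r) hr0 hrδ (le_mul_of_one_le_left hr0.le ht.le) htr1
      rw [mul_div_cancel_right₀ _ hr0.ne'] at hℓtr
      have hℓr := hpos r ⟨hr0, (le_mul_of_one_le_left hr0.le ht.le).trans htr1⟩
      have hℓtr0 := hpos (t * r) ⟨mul_pos ht0 hr0, htr1⟩
      simp only [F, indicator_of_mem (mem_Iio.mpr htr), Real.norm_eq_abs]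
      rw [abs_of_nonneg (by positivity)]
      calc t ^ (-β) * (ℓ (t * r) / ℓ r) ≤ t ^ (-β) * (K * t ^ ((β - 1) / 2)) := by
            gcongr
            rwa [div_le_iff₀ hℓr]
        _ = K * t ^ ((β - 1) / 2 - β) := by
            rw [sub_eq_neg_add _ β, rpow_add ht0]; ring
    · simp only [F, indicator_of_notMem (notMem_Iio.mpr (not_lt.mp htr)), norm_zero]
      positivity
  · refine ae_restrict_of_forall_mem measurableSet_Ioi fun t (ht : 1 < t) => ?_
    have ht0 : 0 < t := one_pos.trans ht
    have hlim := (hℓ t ht0).const_mul (t ^ (-β))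
    rw [mul_one] at hlim
    refine hlim.congr' ?_
    filter_upwards [Ioo_mem_nhdsGT (inv_pos.mpr ht0)] with r ⟨hr0, hrt⟩
    have : t < r⁻¹ := by rwa [lt_inv_comm₀ ht0 hr0]
    simp [F, this]

end SlowlyVaryingAtZero

/-- Proposition 2.2 (ii): if `ℓ : (0,2) → (0,∞)` is measurable, slowly varying at `0` and
bounded away from `0` and `∞` on compact subintervals of `(0,2)`, and `β₂ > 1`, then
`∫_r^1 u^{-β₂} ℓ(u) du ∼ r^{1-β₂} ℓ(r) / (β₂-1)` as `r → 0+`. -/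
theorem stmt_1 (ℓ : ℝ → ℝ) (hmeas : Measurable ℓ)
    (hpos : ∀ t ∈ Set.Ioo (0:ℝ) 2, 0 < ℓ t)
    (hslow : ∀ lam : ℝ, 0 < lam →
      Tendsto (fun r => ℓ (lam * r) / ℓ r) (𝓝[>] (0:ℝ)) (𝓝 1))
    (hbdd : ∀ a b : ℝ, 0 < a → b < 2 → ∃ m M : ℝ, 0 < m ∧
      ∀ t ∈ Set.Icc a b, m ≤ ℓ t ∧ ℓ t ≤ M)
    (β₂ : ℝ) (hβ : 1 < β₂) :
    Tendsto (fun r => (∫ u in Set.Ioo r (1:ℝ), u ^ (-β₂) * ℓ u) /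
      (r ^ (1 - β₂) * ℓ r / (β₂ - 1))) (𝓝[>] (0:ℝ)) (𝓝 1) := by
  have hpos' : ∀ t ∈ Ioc 0 1, 0 < ℓ t := fun t ht => hpos t ⟨ht.1, ht.2.trans_lt one_lt_two⟩
  have hbdd' : ∀ δ > 0, BddAbove (ℓ '' Icc δ 1) := fun δ hδ => by
    obtain ⟨_, M, _, hM⟩ := hbdd δ 1 hδ one_lt_two
    exact ⟨M, forall_mem_image.mpr fun t ht => (hM t ht).2⟩
  have hβ1 : β₂ - 1 ≠ 0 := sub_ne_zero.mpr hβ.ne'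
  have hlim := (SlowlyVaryingAtZero.tendsto_integral_Ioo_rpow_mul_div hslow hmeas hpos' hbdd'
    hβ).const_mul (β₂ - 1)
  rw [mul_inv_cancel₀ hβ1] at hlim
  refine hlim.congr' ?_
  filter_upwards [Ioc_mem_nhdsGT one_pos] with r ⟨hr0, hr1⟩
  have hℓr := hpos' r ⟨hr0, hr1⟩
  rw [integral_Ioo_rpow_mul_eq ℓ β₂ hr0 hr1 hℓr.ne']
  field_simp
end

section
/- Let d ≥ 1, λ ∈ (0, 1/8], x₀ ∈ ℝ^d, r > 0, and let ξ₀ ∈ ℝ^d with |ξ₀| = 1. Set x̃₀ = x₀ - (r/2) ξ₀. Then for all u ∈ B(x₀, 2λr) and all v ∈ B(x̃₀, 2λr), one has |⟨u - v, ξ₀⟩| ≥ √(1 - (8λ)²) · |u - v|. -/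
/-!
The difference `u - v` lies within `4λr = 8λ · (r/2)` of `(r/2) ξ₀`. A vector within `μ|s|` of
`s e`, for a unit vector `e`, makes an angle `θ` with the line `ℝ e` such that `sin θ ≤ μ`,
i.e. `cos² θ ≥ 1 - μ²`.
-/

open scoped RealInnerProductSpace

section Cone

variable {E : Type*} [NormedAddCommGroup E] [InnerProductSpace ℝ E]

theorem one_sub_sq_mul_norm_sq_le_inner_sq {e w : E} {s μ : ℝ} (he : ‖e‖ = 1)
    (hw : ‖w - s • e‖ ≤ |μ * s|) : (1 - μ ^ 2) * ‖w‖ ^ 2 ≤ ⟪w, e⟫ ^ 2 := by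
  have hexpand : ‖w - s • e‖ ^ 2 = ‖w‖ ^ 2 - 2 * s * ⟪w, e⟫ + s ^ 2 := by
    rw [norm_sub_sq_real, real_inner_smul_right, norm_smul, he, Real.norm_eq_abs, mul_one,
      sq_abs]
    ring
  have hsq : ‖w - s • e‖ ^ 2 ≤ μ ^ 2 * s ^ 2 := by
    rw [← mul_pow, ← sq_abs (μ * s)]
    exact pow_le_pow_left₀ (norm_nonneg _) hw 2
  rcases le_or_gt (μ ^ 2) 1 with hμ | hμ
  · -- add `(1 - μ²) · hsq` to `(⟪w, e⟫ - (1 - μ²) s)² ≥ 0`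
    nlinarith [mul_le_mul_of_nonneg_left hsq (sub_nonneg.mpr hμ),
      sq_nonneg (⟪w, e⟫ - (1 - μ ^ 2) * s)]
  · nlinarith [sq_nonneg ‖w‖, sq_nonneg ⟪w, e⟫]

theorem sqrt_one_sub_sq_mul_norm_le_abs_inner {e w : E} {s μ : ℝ} (he : ‖e‖ = 1)
    (hw : ‖w - s • e‖ ≤ |μ * s|) : Real.sqrt (1 - μ ^ 2) * ‖w‖ ≤ |⟪w, e⟫| :=
  calc Real.sqrt (1 - μ ^ 2) * ‖w‖ = Real.sqrt ((1 - μ ^ 2) * ‖w‖ ^ 2) := by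
        rw [Real.sqrt_mul' _ (sq_nonneg _), Real.sqrt_sq (norm_nonneg _)]
    _ ≤ Real.sqrt (⟪w, e⟫ ^ 2) :=
        Real.sqrt_le_sqrt (one_sub_sq_mul_norm_sq_le_inner_sq he hw)
    _ = |⟪w, e⟫| := Real.sqrt_sq_eq_abs _

end Cone

theorem stmt_5_general (d : ℕ) (lam : ℝ)
    (x₀ : EuclideanSpace ℝ (Fin d)) (r : ℝ)
    (ξ₀ : EuclideanSpace ℝ (Fin d)) (hξ₀ : ‖ξ₀‖ = 1) :
    ∀ u ∈ Metric.ball x₀ (2 * lam * r),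
      ∀ v ∈ Metric.ball (x₀ - (r / 2) • ξ₀) (2 * lam * r),
        Real.sqrt (1 - (8 * lam) ^ 2) * ‖u - v‖ ≤ |(inner ℝ (u - v) ξ₀ : ℝ)| := by
  intro u hu v hv
  rw [mem_ball_iff_norm] at hu hv
  refine sqrt_one_sub_sq_mul_norm_le_abs_inner (s := r / 2) hξ₀ ?_
  calc ‖u - v - (r / 2) • ξ₀‖ = ‖(u - x₀) - (v - (x₀ - (r / 2) • ξ₀))‖ := by congr 1; module
    _ ≤ ‖u - x₀‖ + ‖v - (x₀ - (r / 2) • ξ₀)‖ := norm_sub_le _ _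
    _ ≤ 8 * lam * (r / 2) := by linarith
    _ ≤ |8 * lam * (r / 2)| := le_abs_self _

/-- The cone estimate (2.2): for `λ ∈ (0, 1/8]`, a unit vector `ξ₀`,
`x̃₀ = x₀ - (r/2) ξ₀`, every `u ∈ B(x₀, 2λr)` and `v ∈ B(x̃₀, 2λr)` satisfy
`|⟨u - v, ξ₀⟩| ≥ √(1 - (8λ)²) |u - v|`. -/
theorem stmt_5 (d : ℕ) (hd : 1 ≤ d) (lam : ℝ) (hlam : lam ∈ Set.Ioc (0:ℝ) (1/8))
    (x₀ : EuclideanSpace ℝ (Fin d)) (r : ℝ) (hr : 0 < r)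
    (ξ₀ : EuclideanSpace ℝ (Fin d)) (hξ₀ : ‖ξ₀‖ = 1) :
    ∀ u ∈ Metric.ball x₀ (2 * lam * r),
      ∀ v ∈ Metric.ball (x₀ - (r / 2) • ξ₀) (2 * lam * r),
        Real.sqrt (1 - (8 * lam) ^ 2) * ‖u - v‖ ≤ |(inner ℝ (u - v) ξ₀ : ℝ)| :=
  stmt_5_general d lam x₀ r ξ₀ hξ₀
end

section
/- Let d ≥ 1, α ∈ (0,2), let ℓ:(0,2)→(0,∞) be measurable, slowly varying at 0, and bounded away from 0 and ∞ on every compact subinterval of (0,2), and let j:(0,∞)→[0,∞) be measurable with j(t) = ℓ(t) t^{-d-α} for all t ∈ (0,1], with j(t) ≤ κ j(s) whenever 1 ≤ s ≤ t (for some κ ≥ 1), and with ∫_{ℝ^d} (|z|² ∧ 1) j(|z|) dz < ∞. Then there exists a constant c > 0 such that for every x₀ ∈ ℝ^d and every r ∈ (0, 1/4): ∫_{{z : |z - x₀| ≥ 4r}} j(|z - x₀|) dz ≤ c · ℓ(r)/r^α. -/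
open MeasureTheory Topology Filter

private theorem slow_log_tendsto (ℓ : ℝ → ℝ)
    (hpos : ∀ t ∈ Set.Ioo (0:ℝ) 2, 0 < ℓ t)
    (hslow : ∀ lam : ℝ, 0 < lam →
      Tendsto (fun r => ℓ (lam * r) / ℓ r) (𝓝[>] (0:ℝ)) (𝓝 1))
    (v : ℕ → ℝ) (hv0 : ∀ n, 0 < v n) (hvlim : Tendsto v atTop (𝓝 0)) (t : ℝ) :
    Tendsto (fun n => Real.log (ℓ (Real.exp (-t) * v n)) - Real.log (ℓ (v n)))
      atTop (𝓝 0) := by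
  have hlam : 0 < Real.exp (-t) := Real.exp_pos _
  have hv' : Tendsto v atTop (𝓝[>] (0:ℝ)) :=
    tendsto_nhdsWithin_of_tendsto_nhds_of_eventually_within _ hvlim
      (Eventually.of_forall fun n => hv0 n)
  have h1 : Tendsto (fun n => ℓ (Real.exp (-t) * v n) / ℓ (v n)) atTop (𝓝 1) :=
    (hslow _ hlam).comp hv'
  have h2 := h1.log one_ne_zero
  rw [Real.log_one] at h2
  apply h2.congr'
  have hev1 : ∀ᶠ n in atTop, v n < 2 / Real.exp (-t) :=
    hvlim.eventually_lt_const (by positivity)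
  have hev2 : ∀ᶠ n in atTop, v n < 2 := hvlim.eventually_lt_const (by norm_num)
  filter_upwards [hev1, hev2] with n h1n h2n
  have hp1 : 0 < ℓ (Real.exp (-t) * v n) := by
    apply hpos
    constructor
    · exact mul_pos hlam (hv0 n)
    · rw [mul_comm]
      exact (lt_div_iff₀ hlam).mp h1n
  have hp2 : 0 < ℓ (v n) := hpos _ ⟨hv0 n, h2n⟩
  exact Real.log_div hp1.ne' hp2.ne'

private theorem ratio_bound (ℓ : ℝ → ℝ) (hmeas : Measurable ℓ)
    (hpos : ∀ t ∈ Set.Ioo (0:ℝ) 2, 0 < ℓ t)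
    (hslow : ∀ lam : ℝ, 0 < lam →
      Tendsto (fun r => ℓ (lam * r) / ℓ r) (𝓝[>] (0:ℝ)) (𝓝 1)) :
    ∃ C : ℝ, 1 ≤ C ∧ ∃ ρ : ℝ, 0 < ρ ∧ ρ ≤ 1/8 ∧
      ∀ r u : ℝ, 0 < r → r ≤ ρ → 1 ≤ u → u ≤ 2 → ℓ (u * r) ≤ C * ℓ r := by
  by_contra hcon
  push_neg at hcon
  have key : ∀ n : ℕ, ∃ r u : ℝ, 0 < r ∧ r ≤ 1/((n:ℝ)+1) ∧ 1 ≤ u ∧ u ≤ 2 ∧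
      ((n:ℝ)+1) * ℓ r < ℓ (u * r) := by
    intro n
    obtain ⟨r, u, h1, h2, h3, h4, h5⟩ := hcon ((n:ℝ)+1)
      (le_add_of_nonneg_left (Nat.cast_nonneg n)) (min (1/8) (1/((n:ℝ)+1)))
      (lt_min (by norm_num) (by positivity)) (min_le_left _ _)
    exact ⟨r, u, h1, h2.trans (min_le_right _ _), h3, h4, h5⟩
  choose r u hr0 hrle hu1 hu2 hbad using key
  have hu0 : ∀ n, 0 < u n := fun n => lt_of_lt_of_le one_pos (hu1 n)
  have hrlim : Tendsto r atTop (𝓝 0) := by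
    apply tendsto_of_tendsto_of_tendsto_of_le_of_le tendsto_const_nhds
      tendsto_one_div_add_atTop_nhds_zero_nat (fun n => (hr0 n).le) hrle
  have hw0 : ∀ n, 0 < u n * r n := fun n => mul_pos (hu0 n) (hr0 n)
  have hwlim : Tendsto (fun n => u n * r n) atTop (𝓝 0) := by
    have h2 : Tendsto (fun n : ℕ => 2 * (1/((n:ℝ)+1))) atTop (𝓝 (2 * 0)) :=
      tendsto_one_div_add_atTop_nhds_zero_nat.const_mul 2
    rw [mul_zero] at h2
    apply tendsto_of_tendsto_of_tendsto_of_le_of_le tendsto_const_nhds h2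
      (fun n => (hw0 n).le)
      (fun n => mul_le_mul (hu2 n) (hrle n) (hr0 n).le (by norm_num))
  set f : ℕ → ℝ → ℝ :=
    fun n t => Real.log (ℓ (Real.exp (-t) * r n)) - Real.log (ℓ (r n)) with hfdef
  set f2 : ℕ → ℝ → ℝ :=
    fun n t => Real.log (ℓ (Real.exp (-t) * (u n * r n))) - Real.log (ℓ (u n * r n))
    with hf2def
  have hfm : ∀ n, StronglyMeasurable (f n) := by
    intro n
    apply Measurable.stronglyMeasurable
    exact ((hmeas.comp ((Real.measurable_exp.comp measurable_neg).mul_const (r n))).log.sub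
      measurable_const)
  have hf2m : ∀ n, StronglyMeasurable (f2 n) := by
    intro n
    apply Measurable.stronglyMeasurable
    exact ((hmeas.comp ((Real.measurable_exp.comp measurable_neg).mul_const
      (u n * r n))).log.sub measurable_const)
  obtain ⟨tA, htAsub, htAm, htAμ, htAu⟩ :=
    tendstoUniformlyOn_of_ae_tendsto (μ := volume) hfm stronglyMeasurable_const
      (measurableSet_Icc : MeasurableSet (Set.Icc (0:ℝ) 1)) measure_Icc_lt_top.ne
      (Eventually.of_forall fun t _ => slow_log_tendsto ℓ hpos hslow r hr0 hrlim t)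
      (by norm_num : (0:ℝ) < 1/8)
  obtain ⟨tB, htBsub, htBm, htBμ, htBu⟩ :=
    tendstoUniformlyOn_of_ae_tendsto (μ := volume) hf2m stronglyMeasurable_const
      (measurableSet_Icc : MeasurableSet (Set.Icc (0:ℝ) 2)) measure_Icc_lt_top.ne
      (Eventually.of_forall fun t _ =>
        slow_log_tendsto ℓ hpos hslow (fun n => u n * r n) hw0 hwlim t)
      (by norm_num : (0:ℝ) < 1/8)
  rw [Metric.tendstoUniformlyOn_iff] at htAu htBu
  obtain ⟨N₁, hN₁⟩ := eventually_atTop.mp (htAu 1 one_pos)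
  obtain ⟨N₂, hN₂⟩ := eventually_atTop.mp (htBu 1 one_pos)
  set n : ℕ := max (max N₁ N₂) ⌈Real.exp 2⌉₊ with hndef
  set s : ℝ := -Real.log (u n) with hsdef
  have hlogu : 0 ≤ Real.log (u n) := Real.log_nonneg (hu1 n)
  have hlogu2 : Real.log (u n) ≤ 1 := by
    have := Real.log_le_sub_one_of_pos (hu0 n)
    linarith [hu2 n]
  -- the good set is nonempty
  have hGood : ∃ t : ℝ, t ∈ Set.Icc (0:ℝ) 1 \ tA ∧ t - s ∈ Set.Icc (0:ℝ) 2 \ tB := by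
    by_contra hGe
    push_neg at hGe
    have hsubset : Set.Icc (0:ℝ) 1 ⊆ tA ∪ (fun t => t - s) ⁻¹' tB := by
      intro t ht
      by_contra htnot
      rw [Set.mem_union] at htnot
      push_neg at htnot
      refine hGe t ⟨ht, htnot.1⟩ ⟨?_, htnot.2⟩
      constructor
      · simp only [hsdef]
        have := ht.1
        linarith
      · have := ht.2
        simp only [hsdef]
        linarith
    have hμ : volume (Set.Icc (0:ℝ) 1) ≤ volume tA + volume ((fun t : ℝ => t - s) ⁻¹' tB) :=
      le_trans (measure_mono hsubset) (measure_union_le _ _)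
    rw [(measurePreserving_sub_right volume s).measure_preimage htBm.nullMeasurableSet] at hμ
    have : volume (Set.Icc (0:ℝ) 1) ≤ ENNReal.ofReal (1/8) + ENNReal.ofReal (1/8) :=
      le_trans hμ (add_le_add htAμ htBμ)
    rw [Real.volume_Icc, ← ENNReal.ofReal_add (by norm_num) (by norm_num)] at this
    rw [ENNReal.ofReal_le_ofReal_iff (by norm_num)] at this
    norm_num at this
  obtain ⟨t, htA, htB⟩ := hGood
  have h1 : dist ((fun _ => (0:ℝ)) t) (f n t) < 1 :=
    hN₁ n (le_trans (le_max_left _ _) (le_max_left _ _)) t htA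
  have h2 : dist ((fun _ => (0:ℝ)) (t - s)) (f2 n (t - s)) < 1 :=
    hN₂ n (le_trans (le_max_right _ _) (le_max_left _ _)) (t - s) htB
  rw [Real.dist_eq] at h1 h2
  simp only [zero_sub, abs_neg] at h1 h2
  have hkey : Real.exp (-(t - s)) * (u n * r n) = Real.exp (-t) * r n := by
    have hexp : Real.exp (-(t - s)) * u n = Real.exp (-t) := by
      rw [show -(t - s) = -t + s by ring, Real.exp_add, hsdef,
        Real.exp_neg (Real.log (u n)), Real.exp_log (hu0 n)]
      exact inv_mul_cancel_right₀ (hu0 n).ne' _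
    rw [← mul_assoc, hexp]
  have hf2eq : f2 n (t - s) =
      Real.log (ℓ (Real.exp (-t) * r n)) - Real.log (ℓ (u n * r n)) := by
    simp only [hf2def, hkey]
  have hrpos2 : r n ∈ Set.Ioo (0:ℝ) 2 := by
    refine ⟨hr0 n, lt_of_le_of_lt (hrle n) ?_⟩
    rw [div_lt_iff₀ (by positivity)]
    nlinarith [Nat.cast_nonneg (α := ℝ) n]
  have hℓr : 0 < ℓ (r n) := hpos _ hrpos2
  have hbadlog : Real.log ((n:ℝ)+1) ≤ Real.log (ℓ (u n * r n)) - Real.log (ℓ (r n)) := by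
    have hlt : ((n:ℝ)+1) * ℓ (r n) ≤ ℓ (u n * r n) := (hbad n).le
    have h3 : Real.log (((n:ℝ)+1) * ℓ (r n)) ≤ Real.log (ℓ (u n * r n)) :=
      Real.log_le_log (by positivity) hlt
    rw [Real.log_mul (by positivity) hℓr.ne'] at h3
    linarith
  have hnlarge : (2:ℝ) < Real.log ((n:ℝ)+1) := by
    rw [Real.lt_log_iff_exp_lt (by positivity)]
    have h4 : Real.exp 2 ≤ (⌈Real.exp 2⌉₊ : ℝ) := Nat.le_ceil _
    have h5 : (⌈Real.exp 2⌉₊ : ℝ) ≤ (n:ℝ) := Nat.cast_le.mpr (le_max_right _ _)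
    linarith
  have hcombine : f n t - f2 n (t - s) =
      Real.log (ℓ (u n * r n)) - Real.log (ℓ (r n)) := by
    rw [hf2eq]; simp only [hfdef]; ring
  have ha1 := abs_lt.mp h1
  have ha2 := abs_lt.mp h2
  have : Real.log (ℓ (u n * r n)) - Real.log (ℓ (r n)) < 2 := by
    rw [← hcombine]; linarith [ha1.2, ha2.1]
  linarith

private theorem potter (α : ℝ) (hα0 : 0 < α) (ℓ : ℝ → ℝ) (hmeas : Measurable ℓ)
    (hpos : ∀ t ∈ Set.Ioo (0:ℝ) 2, 0 < ℓ t)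
    (hslow : ∀ lam : ℝ, 0 < lam →
      Tendsto (fun r => ℓ (lam * r) / ℓ r) (𝓝[>] (0:ℝ)) (𝓝 1))
    (hC : ∃ C : ℝ, 1 ≤ C ∧ ∃ ρ : ℝ, 0 < ρ ∧ ρ ≤ 1/8 ∧
      ∀ r u : ℝ, 0 < r → r ≤ ρ → 1 ≤ u → u ≤ 2 → ℓ (u * r) ≤ C * ℓ r) :
    ∃ C ρ : ℝ, 1 ≤ C ∧ 0 < ρ ∧ ρ ≤ 1/8 ∧
      ∀ r t : ℝ, 0 < r → r ≤ t → t ≤ ρ → ℓ t ≤ C * (t/r) ^ (α/2) * ℓ r := by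
  obtain ⟨C, hC1, ρ₀, hρ₀, hρ₀8, hCb⟩ := hC
  have hβ : (1:ℝ) < 2 ^ (α/2) :=
    Real.one_lt_rpow_iff_of_pos two_pos |>.mpr (Or.inl ⟨one_lt_two, by positivity⟩)
  have hev : ∀ᶠ s in 𝓝[>] (0:ℝ), ℓ (2*s)/ℓ s < 2^(α/2) :=
    (hslow 2 two_pos).eventually_lt_const hβ
  rw [eventually_nhdsWithin_iff] at hev
  rw [Metric.eventually_nhds_iff] at hev
  obtain ⟨δ, hδ0, hδ⟩ := hev
  set ρ : ℝ := min ρ₀ (min (δ/2) (1/8)) with hρdef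
  have hρpos : 0 < ρ := lt_min hρ₀ (lt_min (by positivity) (by norm_num))
  have hρ8 : ρ ≤ 1/8 := le_trans (min_le_right _ _) (min_le_right _ _)
  have hρδ : ρ ≤ δ/2 := le_trans (min_le_right _ _) (min_le_left _ _)
  have hρρ₀ : ρ ≤ ρ₀ := min_le_left _ _
  -- doubling step
  have hdouble : ∀ s : ℝ, 0 < s → s ≤ ρ/2 → ℓ (2*s) ≤ 2^(α/2) * ℓ s := by
    intro s hs hsρ
    have hsδ : dist s 0 < δ := by
      rw [Real.dist_eq, sub_zero, abs_of_pos hs]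
      have : ρ/2 < δ := by linarith
      linarith
    have hsp : 0 < ℓ s := hpos _ ⟨hs, by nlinarith⟩
    have := hδ hsδ (Set.mem_Ioi.mpr hs)
    exact le_of_lt ((div_lt_iff₀ hsp).mp this)
  have chain : ∀ k : ℕ, ∀ r : ℝ, 0 < r → (2:ℝ)^k * r ≤ ρ →
      ℓ ((2:ℝ)^k * r) ≤ 2 ^ ((k:ℝ) * (α/2)) * ℓ r := by
    intro k
    induction k with
    | zero => intro r hr _; simp
    | succ k ih =>
      intro r hr hle
      have h2 : (2:ℝ)^(k+1) * r = 2 * ((2:ℝ)^k * r) := by ring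
      have hk : (2:ℝ)^k * r ≤ ρ/2 := by
        have hpow : (0:ℝ) < (2:ℝ)^k * r := by positivity
        nlinarith [hle, h2]
      have hih := ih r hr (le_trans hk (by linarith))
      have hstep := hdouble ((2:ℝ)^k * r) (by positivity) hk
      rw [h2]
      calc ℓ (2 * ((2:ℝ)^k * r)) ≤ 2^(α/2) * ℓ ((2:ℝ)^k * r) := hstep
        _ ≤ 2^(α/2) * (2 ^ ((k:ℝ) * (α/2)) * ℓ r) := by
            apply mul_le_mul_of_nonneg_left hih (by positivity)
        _ = 2 ^ (((k+1 : ℕ):ℝ) * (α/2)) * ℓ r := by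
            rw [← mul_assoc, ← Real.rpow_add two_pos]; push_cast; ring_nf
  refine ⟨C, ρ, hC1, hρpos, hρ8, ?_⟩
  intro r t hr hrt htρ
  have ht : 0 < t := lt_of_lt_of_le hr hrt
  have htr1 : 1 ≤ t/r := (one_le_div hr).mpr hrt
  have htr0 : 0 < t/r := by positivity
  have hlogb0 : 0 ≤ Real.logb 2 (t/r) := Real.logb_nonneg one_lt_two htr1
  set k : ℕ := ⌊Real.logb 2 (t/r)⌋₊ with hkdef
  have h2k : (2:ℝ)^k ≤ t/r := by
    calc (2:ℝ)^k = 2 ^ ((k:ℝ)) := by rw [Real.rpow_natCast]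
      _ ≤ 2 ^ Real.logb 2 (t/r) :=
          Real.rpow_le_rpow_of_exponent_le one_le_two (Nat.floor_le hlogb0)
      _ = t/r := Real.rpow_logb two_pos (by norm_num) htr0
  have h2k1 : t/r < (2:ℝ)^(k+1) := by
    calc t/r = 2 ^ Real.logb 2 (t/r) := (Real.rpow_logb two_pos (by norm_num) htr0).symm
      _ < 2 ^ (((k:ℝ)+1)) := by
          apply Real.rpow_lt_rpow_of_exponent_lt one_lt_two
          exact_mod_cast Nat.lt_floor_add_one (Real.logb 2 (t/r))
      _ = (2:ℝ)^(k+1) := by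
          rw [show ((k:ℝ)+1) = ((k+1 : ℕ) : ℝ) by push_cast; ring, Real.rpow_natCast]
  set b : ℝ := (2:ℝ)^k * r with hbdef
  have hb0 : 0 < b := by positivity
  have hbt : b ≤ t := by
    rw [hbdef]
    rw [← le_div_iff₀ hr] at *
    exact h2k
  have hbρ : b ≤ ρ := le_trans hbt htρ
  set u : ℝ := t / b with hudef
  have hu1 : 1 ≤ u := (one_le_div hb0).mpr hbt
  have hu2 : u ≤ 2 := by
    rw [hudef, div_le_iff₀ hb0, hbdef]
    have h := (div_lt_iff₀ hr).mp h2k1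
    have hps : (2:ℝ)^(k+1) = 2^k * 2 := pow_succ 2 k
    rw [hps] at h
    linarith
  have hteq : t = u * b := by
    rw [hudef]; field_simp
  have hℓr : 0 < ℓ r := hpos _ ⟨hr, by nlinarith⟩
  have h1 : ℓ t ≤ C * ℓ b := by
    rw [hteq]
    exact hCb b u hb0 (le_trans hbt htρ |>.trans hρρ₀) hu1 hu2
  have h2 : ℓ b ≤ 2 ^ ((k:ℝ) * (α/2)) * ℓ r := chain k r hr hbρ
  have h3 : (2:ℝ) ^ ((k:ℝ) * (α/2)) ≤ (t/r) ^ (α/2) := by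
    calc (2:ℝ) ^ ((k:ℝ) * (α/2)) = ((2:ℝ) ^ (k:ℝ)) ^ (α/2) := by
          rw [← Real.rpow_mul (by norm_num)]
      _ = ((2:ℝ)^k : ℝ) ^ (α/2) := by rw [Real.rpow_natCast]
      _ ≤ (t/r) ^ (α/2) := Real.rpow_le_rpow (by positivity) h2k (by positivity)
  have hC0 : (0:ℝ) < C := lt_of_lt_of_le one_pos hC1
  calc ℓ t ≤ C * ℓ b := h1
    _ ≤ C * (2 ^ ((k:ℝ) * (α/2)) * ℓ r) := mul_le_mul_of_nonneg_left h2 hC0.le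
    _ ≤ C * ((t/r) ^ (α/2) * ℓ r) := by
        apply mul_le_mul_of_nonneg_left _ hC0.le
        exact mul_le_mul_of_nonneg_right h3 hℓr.le
    _ = C * (t/r) ^ (α/2) * ℓ r := by ring

private theorem lower_bound (α : ℝ) (hα0 : 0 < α) (ℓ : ℝ → ℝ)
    (hpos : ∀ t ∈ Set.Ioo (0:ℝ) 2, 0 < ℓ t)
    (hslow : ∀ lam : ℝ, 0 < lam →
      Tendsto (fun r => ℓ (lam * r) / ℓ r) (𝓝[>] (0:ℝ)) (𝓝 1))
    (hbdd : ∀ a b : ℝ, 0 < a → b < 2 → ∃ m M : ℝ, 0 < m ∧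
      ∀ t ∈ Set.Icc a b, m ≤ ℓ t ∧ ℓ t ≤ M) :
    ∃ c₀ : ℝ, 0 < c₀ ∧ ∀ r : ℝ, 0 < r → r < 1/4 → c₀ * r ^ α ≤ ℓ r := by
  set γ : ℝ := 2 ^ (-(α/2)) with hγdef
  have hγ0 : 0 < γ := by positivity
  have hγ1 : γ < 1 := Real.rpow_lt_one_of_one_lt_of_neg one_lt_two (by linarith)
  have hev : ∀ᶠ s in 𝓝[>] (0:ℝ), γ < ℓ ((1/2)*s)/ℓ s :=
    (hslow (1/2) (by norm_num)).eventually_const_lt hγ1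
  rw [eventually_nhdsWithin_iff] at hev
  rw [Metric.eventually_nhds_iff] at hev
  obtain ⟨δ, hδ0, hδ⟩ := hev
  set δ₁ : ℝ := min (δ/2) (1/4) with hδ₁def
  have hδ₁0 : 0 < δ₁ := lt_min (by positivity) (by norm_num)
  have hδ₁4 : δ₁ ≤ 1/4 := min_le_right _ _
  have hδ₁δ : δ₁ < δ := lt_of_le_of_lt (min_le_left _ _) (by linarith)
  have hhalf : ∀ s : ℝ, 0 < s → s ≤ δ₁ → γ * ℓ s ≤ ℓ ((1/2)*s) := by
    intro s hs hsδ
    have hsp : 0 < ℓ s := hpos _ ⟨hs, by nlinarith⟩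
    have hd : dist s 0 < δ := by
      rw [Real.dist_eq, sub_zero, abs_of_pos hs]; linarith
    have := hδ hd (Set.mem_Ioi.mpr hs)
    exact le_of_lt ((lt_div_iff₀ hsp).mp this)
  have chain : ∀ k : ℕ, ∀ s : ℝ, 0 < s → s ≤ δ₁ → γ^k * ℓ s ≤ ℓ (s / 2^k) := by
    intro k
    induction k with
    | zero => intro s hs _; simp
    | succ k ih =>
      intro s hs hsδ
      have hsk : 0 < s / 2^k := by positivity
      have hskδ : s / 2^k ≤ δ₁ := by
        apply le_trans _ hsδ
        rw [div_le_iff₀ (by positivity)]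
        nlinarith [one_le_pow₀ (one_le_two (α := ℝ)) (n := k), hs]
      have h1 := hhalf (s / 2^k) hsk hskδ
      have h2 : (1/2) * (s / 2^k) = s / 2^(k+1) := by
        rw [pow_succ]; ring
      rw [h2] at h1
      calc γ^(k+1) * ℓ s = γ * (γ^k * ℓ s) := by ring
        _ ≤ γ * ℓ (s / 2^k) := mul_le_mul_of_nonneg_left (ih s hs hsδ) hγ0.le
        _ ≤ ℓ (s / 2^(k+1)) := h1
  obtain ⟨m₁, M₁, hm₁, hbd₁⟩ := hbdd (δ₁/2) δ₁ (by positivity) (by linarith)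
  obtain ⟨m₂, M₂, hm₂, hbd₂⟩ := hbdd (δ₁/2) (1/4) (by positivity) (by norm_num)
  refine ⟨min m₁ m₂, lt_min hm₁ hm₂, ?_⟩
  intro r hr hr4
  by_cases hcase : δ₁/2 ≤ r
  · have hrle : m₂ ≤ ℓ r := (hbd₂ r ⟨hcase, hr4.le⟩).1
    have hrα : r ^ α ≤ 1 := Real.rpow_le_one hr.le (by linarith) hα0.le
    calc min m₁ m₂ * r ^ α ≤ m₂ * 1 := by
          apply mul_le_mul (min_le_right _ _) hrα (by positivity) hm₂.le
      _ ≤ ℓ r := by linarith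
  · push_neg at hcase
    have hq1 : 1 ≤ δ₁/(2*r) := by
      rw [le_div_iff₀ (by positivity)]; linarith
    have hq0 : 0 < δ₁/(2*r) := by positivity
    have hlogb0 : 0 ≤ Real.logb 2 (δ₁/(2*r)) := Real.logb_nonneg one_lt_two hq1
    set k₀ : ℕ := ⌊Real.logb 2 (δ₁/(2*r))⌋₊ with hk₀def
    set k : ℕ := k₀ + 1 with hkdef
    have h2k₀ : (2:ℝ)^k₀ ≤ δ₁/(2*r) := by
      calc (2:ℝ)^k₀ = 2 ^ ((k₀:ℝ)) := by rw [Real.rpow_natCast]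
        _ ≤ 2 ^ Real.logb 2 (δ₁/(2*r)) :=
            Real.rpow_le_rpow_of_exponent_le one_le_two (Nat.floor_le hlogb0)
        _ = δ₁/(2*r) := Real.rpow_logb two_pos (by norm_num) hq0
    have h2k₀1 : δ₁/(2*r) < (2:ℝ)^k := by
      calc δ₁/(2*r) = 2 ^ Real.logb 2 (δ₁/(2*r)) :=
            (Real.rpow_logb two_pos (by norm_num) hq0).symm
        _ < 2 ^ (((k₀:ℝ)+1)) := by
            apply Real.rpow_lt_rpow_of_exponent_lt one_lt_two
            exact_mod_cast Nat.lt_floor_add_one (Real.logb 2 (δ₁/(2*r)))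
        _ = (2:ℝ)^k := by
            rw [hkdef, show ((k₀:ℝ)+1) = ((k₀+1 : ℕ) : ℝ) by push_cast; ring,
              Real.rpow_natCast]
    set s : ℝ := (2:ℝ)^k * r with hsdef
    have hs0 : 0 < s := by positivity
    have hsδ₁ : s ≤ δ₁ := by
      rw [hsdef, hkdef, pow_succ]
      calc (2:ℝ)^k₀ * 2 * r = (2:ℝ)^k₀ * (2*r) := by ring
        _ ≤ (δ₁/(2*r)) * (2*r) := by
            apply mul_le_mul_of_nonneg_right h2k₀ (by positivity)
        _ = δ₁ := by field_simp
    have hsδ₁2 : δ₁/2 ≤ s := by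
      rw [hsdef]
      have : δ₁/(2*r) < (2:ℝ)^k := h2k₀1
      rw [div_lt_iff₀ (by positivity)] at this
      nlinarith
    have hreq : r = s / 2^k := by
      rw [hsdef]; field_simp
    have hc := chain k s hs0 hsδ₁
    rw [← hreq] at hc
    have hℓs : m₁ ≤ ℓ s := (hbd₁ s ⟨hsδ₁2, hsδ₁⟩).1
    have hγk : r ^ α ≤ γ^k := by
      have hrk : r ≤ ((2:ℝ)^k)⁻¹ := by
        rw [hreq]
        rw [div_le_iff₀ (by positivity)]
        rw [inv_mul_cancel₀ (by positivity)]
        calc s ≤ δ₁ := hsδ₁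
          _ ≤ 1 := by linarith
      calc r ^ α ≤ (((2:ℝ)^k)⁻¹) ^ α := Real.rpow_le_rpow hr.le hrk hα0.le
        _ = (2:ℝ) ^ (-(k:ℝ) * α) := by
            rw [← Real.rpow_natCast 2 k, ← Real.rpow_neg (by norm_num),
              ← Real.rpow_mul (by norm_num)]
        _ ≤ (2:ℝ) ^ (-(k:ℝ) * (α/2)) := by
            apply Real.rpow_le_rpow_of_exponent_le one_le_two
            have : 0 ≤ (k:ℝ) * (α/2) := by positivity
            nlinarith
        _ = γ^k := by
            rw [hγdef, ← Real.rpow_natCast (2 ^ (-(α/2))) k, ← Real.rpow_mul (by norm_num)]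
            ring_nf
    calc min m₁ m₂ * r ^ α ≤ m₁ * γ^k := by
          apply mul_le_mul (min_le_left _ _) hγk (by positivity) hm₁.le
      _ ≤ ℓ s * γ^k := by nlinarith [pow_pos hγ0 k]
      _ = γ^k * ℓ s := by ring
      _ ≤ ℓ r := hc
private theorem std_integrable (d : ℕ) (β R : ℝ) (hβ : 0 < β) (hR : 0 < R) :
    IntegrableOn (fun z : EuclideanSpace ℝ (Fin d) => ‖z‖ ^ (-((d:ℝ) + β)))
      {z : EuclideanSpace ℝ (Fin d) | R ≤ ‖z‖} volume := by
  have hSm : MeasurableSet {z : EuclideanSpace ℝ (Fin d) | R ≤ ‖z‖} :=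
    measurableSet_le measurable_const measurable_norm
  have hfin : (Module.finrank ℝ (EuclideanSpace ℝ (Fin d)) : ℝ) < (d:ℝ) + β := by
    rw [finrank_euclideanSpace_fin]; linarith
  have hint : Integrable (fun z : EuclideanSpace ℝ (Fin d) => (1 + ‖z‖) ^ (-((d:ℝ) + β))) :=
    integrable_one_add_norm hfin
  have hint2 := (hint.const_mul ((1 + R⁻¹) ^ ((d:ℝ) + β))).integrableOn
    (s := {z : EuclideanSpace ℝ (Fin d) | R ≤ ‖z‖})
  apply Integrable.mono' hint2
  · exact (Measurable.aestronglyMeasurable (by fun_prop)).restrict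
  · rw [ae_restrict_iff' hSm]
    apply Eventually.of_forall
    intro z hz
    have hzR : R ≤ ‖z‖ := hz
    have hz0 : (0:ℝ) < ‖z‖ := lt_of_lt_of_le hR hzR
    have hs0 : (0:ℝ) < (d:ℝ) + β := by positivity
    rw [Real.norm_eq_abs, abs_of_nonneg (Real.rpow_nonneg (norm_nonneg z) _)]
    have h1 : 1 + ‖z‖ ≤ (1 + R⁻¹) * ‖z‖ := by
      have hinv : R * R⁻¹ = 1 := mul_inv_cancel₀ hR.ne'
      have h2 : R⁻¹ * R ≤ R⁻¹ * ‖z‖ :=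
        mul_le_mul_of_nonneg_left hzR (inv_nonneg.mpr hR.le)
      nlinarith
    have h2 : ((1 + R⁻¹) * ‖z‖) ^ (-((d:ℝ)+β)) ≤ (1 + ‖z‖) ^ (-((d:ℝ)+β)) :=
      Real.rpow_le_rpow_of_nonpos (by positivity) h1 (by linarith)
    have h3 : ((1 + R⁻¹) * ‖z‖) ^ (-((d:ℝ)+β)) =
        (1 + R⁻¹) ^ (-((d:ℝ)+β)) * ‖z‖ ^ (-((d:ℝ)+β)) :=
      Real.mul_rpow (by positivity) (norm_nonneg z)
    calc ‖z‖ ^ (-((d:ℝ)+β))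
        = ((1 + R⁻¹) ^ ((d:ℝ)+β) * (1 + R⁻¹) ^ (-((d:ℝ)+β))) * ‖z‖ ^ (-((d:ℝ)+β)) := by
          rw [← Real.rpow_add (by positivity), add_neg_cancel, Real.rpow_zero, one_mul]
      _ = (1 + R⁻¹) ^ ((d:ℝ)+β) * ((1 + R⁻¹) ^ (-((d:ℝ)+β)) * ‖z‖ ^ (-((d:ℝ)+β))) := by ring
      _ ≤ (1 + R⁻¹) ^ ((d:ℝ)+β) * (1 + ‖z‖) ^ (-((d:ℝ)+β)) := by
          apply mul_le_mul_of_nonneg_left _ (Real.rpow_nonneg (by positivity) _)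
          rw [← h3]; exact h2

private theorem std_scale (d : ℕ) (β R : ℝ) (hβ : 0 < β) (hR : 0 < R) :
    ∫ z in {z : EuclideanSpace ℝ (Fin d) | R ≤ ‖z‖}, ‖z‖ ^ (-((d:ℝ) + β)) =
      R ^ (-β) * ∫ z in {z : EuclideanSpace ℝ (Fin d) | 1 ≤ ‖z‖}, ‖z‖ ^ (-((d:ℝ) + β)) := by
  have h1m : MeasurableSet {w : EuclideanSpace ℝ (Fin d) | 1 ≤ ‖w‖} :=
    measurableSet_le measurable_const measurable_norm
  have hRm : MeasurableSet {w : EuclideanSpace ℝ (Fin d) | R ≤ ‖w‖} :=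
    measurableSet_le measurable_const measurable_norm
  set g : EuclideanSpace ℝ (Fin d) → ℝ :=
    Set.indicator {w : EuclideanSpace ℝ (Fin d) | 1 ≤ ‖w‖}
      (fun w => ‖w‖ ^ (-((d:ℝ) + β))) with hgdef
  have hcomp := MeasureTheory.Measure.integral_comp_smul
    (volume : Measure (EuclideanSpace ℝ (Fin d))) g R⁻¹
  have hgeq : (fun z : EuclideanSpace ℝ (Fin d) => g (R⁻¹ • z)) =
      Set.indicator {w : EuclideanSpace ℝ (Fin d) | R ≤ ‖w‖}
        (fun w => R ^ ((d:ℝ) + β) * ‖w‖ ^ (-((d:ℝ) + β))) := by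
    funext z
    have hnorm : ‖R⁻¹ • z‖ = R⁻¹ * ‖z‖ := by
      rw [norm_smul, Real.norm_eq_abs, abs_of_pos (inv_pos.mpr hR)]
    have hRR : R * R⁻¹ = 1 := mul_inv_cancel₀ hR.ne'
    have hiff : (1:ℝ) ≤ R⁻¹ * ‖z‖ ↔ R ≤ ‖z‖ := by
      constructor
      · intro h; nlinarith
      · intro h
        have := mul_le_mul_of_nonneg_left h (inv_nonneg.mpr hR.le)
        nlinarith
    simp only [hgdef]
    by_cases hz : R ≤ ‖z‖
    · have hz0 : (0:ℝ) < ‖z‖ := lt_of_lt_of_le hR hz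
      have hmem1 : R⁻¹ • z ∈ {w : EuclideanSpace ℝ (Fin d) | 1 ≤ ‖w‖} := by
        rw [Set.mem_setOf_eq, hnorm]; exact hiff.mpr hz
      have hmem2 : z ∈ {w : EuclideanSpace ℝ (Fin d) | R ≤ ‖w‖} := hz
      rw [Set.indicator_of_mem hmem1, Set.indicator_of_mem hmem2]
      rw [hnorm, Real.mul_rpow (inv_nonneg.mpr hR.le) (norm_nonneg z)]
      have : (R⁻¹) ^ (-((d:ℝ)+β)) = R ^ ((d:ℝ)+β) := by
        rw [Real.inv_rpow hR.le, ← Real.rpow_neg hR.le, neg_neg]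
      rw [this]
    · have hmem1 : R⁻¹ • z ∉ {w : EuclideanSpace ℝ (Fin d) | 1 ≤ ‖w‖} := by
        rw [Set.mem_setOf_eq, hnorm]; exact fun h => hz (hiff.mp h)
      have hmem2 : z ∉ {w : EuclideanSpace ℝ (Fin d) | R ≤ ‖w‖} := hz
      rw [Set.indicator_of_notMem hmem1, Set.indicator_of_notMem hmem2]
  rw [hgeq] at hcomp
  rw [integral_indicator hRm] at hcomp
  rw [integral_const_mul] at hcomp
  rw [hgdef, integral_indicator h1m] at hcomp
  rw [finrank_euclideanSpace_fin, inv_pow, inv_inv, abs_of_pos (pow_pos hR d),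
    smul_eq_mul] at hcomp
  have hRs0 : (0:ℝ) < R ^ ((d:ℝ) + β) := Real.rpow_pos_of_pos hR _
  have hrs : (R:ℝ)^(d:ℕ) = R ^ ((d:ℝ)) := (Real.rpow_natCast R d).symm
  calc ∫ z in {z : EuclideanSpace ℝ (Fin d) | R ≤ ‖z‖}, ‖z‖ ^ (-((d:ℝ) + β))
      = (R ^ ((d:ℝ)+β))⁻¹ *
        (R ^ ((d:ℝ)+β) * ∫ z in {z : EuclideanSpace ℝ (Fin d) | R ≤ ‖z‖}, ‖z‖ ^ (-((d:ℝ) + β))) := by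
        field_simp
    _ = (R ^ ((d:ℝ)+β))⁻¹ *
        (R ^ ((d:ℝ)) * ∫ z in {z : EuclideanSpace ℝ (Fin d) | 1 ≤ ‖z‖}, ‖z‖ ^ (-((d:ℝ) + β))) := by
        rw [hcomp, hrs]
    _ = ((R ^ ((d:ℝ)+β))⁻¹ * R ^ ((d:ℝ))) *
        ∫ z in {z : EuclideanSpace ℝ (Fin d) | 1 ≤ ‖z‖}, ‖z‖ ^ (-((d:ℝ) + β)) := by ring
    _ = R ^ (-β) * ∫ z in {z : EuclideanSpace ℝ (Fin d) | 1 ≤ ‖z‖}, ‖z‖ ^ (-((d:ℝ) + β)) := by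
        rw [← Real.rpow_neg hR.le, ← Real.rpow_add hR,
          show -((d:ℝ)+β) + (d:ℝ) = -β by ring]
private theorem tail_bound (d : ℕ) (j : ℝ → ℝ) (hjmeas : Measurable j)
    (hjnn : ∀ t : ℝ, 0 < t → 0 ≤ j t)
    (hint : Integrable (fun z : EuclideanSpace ℝ (Fin d) => min (‖z‖ ^ 2) 1 * j ‖z‖))
    (ρ : ℝ) (hρ0 : 0 < ρ) (hρ1 : ρ ≤ 1)
    (S : Set (EuclideanSpace ℝ (Fin d))) (hSm : MeasurableSet S)
    (hS : ∀ z ∈ S, ρ ≤ ‖z‖) :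
    IntegrableOn (fun z : EuclideanSpace ℝ (Fin d) => j ‖z‖) S volume ∧
    (∫ z in S, j ‖z‖) ≤ (ρ^2)⁻¹ * ∫ z : EuclideanSpace ℝ (Fin d), min (‖z‖ ^ 2) 1 * j ‖z‖ := by
  have hjm : AEStronglyMeasurable (fun z : EuclideanSpace ℝ (Fin d) => j ‖z‖) volume :=
    (hjmeas.comp measurable_norm).aestronglyMeasurable
  have hmin0 : ∀ z : EuclideanSpace ℝ (Fin d), 0 ≤ min (‖z‖ ^ 2) 1 * j ‖z‖ := by
    intro z
    rcases eq_or_lt_of_le (norm_nonneg z) with h | h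
    · rw [← h]; norm_num
    · exact mul_nonneg (le_min (by positivity) zero_le_one) (hjnn _ h)
  have hdom : Integrable (fun z : EuclideanSpace ℝ (Fin d) =>
      (ρ^2)⁻¹ * (min (‖z‖ ^ 2) 1 * j ‖z‖)) volume := hint.const_mul _
  have hpb : ∀ z ∈ S, j ‖z‖ ≤ (ρ^2)⁻¹ * (min (‖z‖ ^ 2) 1 * j ‖z‖) := by
    intro z hz
    have hz0 : (0:ℝ) < ‖z‖ := lt_of_lt_of_le hρ0 (hS z hz)
    have h1 : ρ^2 ≤ min (‖z‖^2) 1 :=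
      le_min (by nlinarith [hS z hz]) (by nlinarith)
    calc j ‖z‖ = (ρ^2)⁻¹ * (ρ^2 * j ‖z‖) := by field_simp
      _ ≤ (ρ^2)⁻¹ * (min (‖z‖^2) 1 * j ‖z‖) := by
          apply mul_le_mul_of_nonneg_left
            (mul_le_mul_of_nonneg_right h1 (hjnn _ hz0)) (by positivity)
  have hIS : IntegrableOn (fun z : EuclideanSpace ℝ (Fin d) => j ‖z‖) S volume := by
    apply Integrable.mono' hdom.integrableOn hjm.restrict
    rw [ae_restrict_iff' hSm]
    apply Eventually.of_forall
    intro z hz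
    rw [Real.norm_eq_abs, abs_of_nonneg (hjnn _ (lt_of_lt_of_le hρ0 (hS z hz)))]
    exact hpb z hz
  refine ⟨hIS, ?_⟩
  calc (∫ z in S, j ‖z‖) ≤ ∫ z in S, (ρ^2)⁻¹ * (min (‖z‖ ^ 2) 1 * j ‖z‖) :=
        setIntegral_mono_on hIS hdom.integrableOn hSm hpb
    _ ≤ ∫ z : EuclideanSpace ℝ (Fin d), (ρ^2)⁻¹ * (min (‖z‖ ^ 2) 1 * j ‖z‖) :=
        setIntegral_le_integral hdom (Eventually.of_forall fun z =>
          mul_nonneg (by positivity) (hmin0 z))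
    _ = (ρ^2)⁻¹ * ∫ z : EuclideanSpace ℝ (Fin d), min (‖z‖ ^ 2) 1 * j ‖z‖ :=
        integral_const_mul _ _

/-- Estimate (4.8): under (J1), (J2) and the Lévy integrability condition, there is
`c > 0` such that for all `x₀` and `r ∈ (0, 1/4)`,
`∫_{|z - x₀| ≥ 4r} j(|z - x₀|) dz ≤ c ℓ(r)/r^α`. -/
theorem stmt_6 (d : ℕ) (hd : 1 ≤ d) (α : ℝ) (hα : α ∈ Set.Ioo (0:ℝ) 2)
    (ℓ : ℝ → ℝ) (hmeas : Measurable ℓ)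
    (hpos : ∀ t ∈ Set.Ioo (0:ℝ) 2, 0 < ℓ t)
    (hslow : ∀ lam : ℝ, 0 < lam →
      Tendsto (fun r => ℓ (lam * r) / ℓ r) (𝓝[>] (0:ℝ)) (𝓝 1))
    (hbdd : ∀ a b : ℝ, 0 < a → b < 2 → ∃ m M : ℝ, 0 < m ∧
      ∀ t ∈ Set.Icc a b, m ≤ ℓ t ∧ ℓ t ≤ M)
    (j : ℝ → ℝ) (hjmeas : Measurable j) (hjnn : ∀ t : ℝ, 0 < t → 0 ≤ j t)
    (hJ1 : ∀ t ∈ Set.Ioc (0:ℝ) 1, j t = ℓ t * t ^ (-(d:ℝ) - α))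
    (κ : ℝ) (hκ : 1 ≤ κ) (hJ2 : ∀ s t : ℝ, 1 ≤ s → s ≤ t → j t ≤ κ * j s)
    (hint : Integrable (fun z : EuclideanSpace ℝ (Fin d) => min (‖z‖ ^ 2) 1 * j ‖z‖)) :
    ∃ c : ℝ, 0 < c ∧ ∀ (x₀ : EuclideanSpace ℝ (Fin d)), ∀ r ∈ Set.Ioo (0:ℝ) (1/4),
      (∫ z in {z : EuclideanSpace ℝ (Fin d) | 4 * r ≤ ‖z - x₀‖}, j ‖z - x₀‖) ≤
        c * ℓ r / r ^ α := by
  obtain ⟨hα0, hα2⟩ := hα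
  obtain ⟨C, ρ, hC1, hρ0, hρ8, hpot⟩ :=
    potter α hα0 ℓ hmeas hpos hslow (ratio_bound ℓ hmeas hpos hslow)
  obtain ⟨c₀, hc₀, hlow⟩ := lower_bound α hα0 ℓ hpos hslow hbdd
  have hC0 : (0:ℝ) < C := lt_of_lt_of_le one_pos hC1
  have hjm : AEStronglyMeasurable (fun z : EuclideanSpace ℝ (Fin d) => j ‖z‖) volume :=
    (hjmeas.comp measurable_norm).aestronglyMeasurable
  set T : ℝ := ∫ z : EuclideanSpace ℝ (Fin d), min (‖z‖ ^ 2) 1 * j ‖z‖ with hTdef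
  have hmin0 : ∀ z : EuclideanSpace ℝ (Fin d), 0 ≤ min (‖z‖ ^ 2) 1 * j ‖z‖ := by
    intro z
    rcases eq_or_lt_of_le (norm_nonneg z) with h | h
    · rw [← h]; norm_num
    · exact mul_nonneg (le_min (by positivity) zero_le_one) (hjnn _ h)
  have hT0 : 0 ≤ T := integral_nonneg hmin0
  set K : ℝ := ∫ z in {z : EuclideanSpace ℝ (Fin d) | 1 ≤ ‖z‖}, ‖z‖ ^ (-((d:ℝ) + α/2))
    with hKdef
  have hK0 : 0 ≤ K := setIntegral_nonneg
    (measurableSet_le measurable_const measurable_norm)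
    (fun z _ => Real.rpow_nonneg (norm_nonneg z) _)
  refine ⟨C * K + (T + 1)/(ρ^2 * c₀) + 1, by positivity, ?_⟩
  intro x₀ r hr
  obtain ⟨hr0, hr4⟩ := hr
  have hSm : MeasurableSet {z : EuclideanSpace ℝ (Fin d) | 4 * r ≤ ‖z‖} :=
    measurableSet_le measurable_const measurable_norm
  have htrans : (∫ z in {z : EuclideanSpace ℝ (Fin d) | 4 * r ≤ ‖z - x₀‖}, j ‖z - x₀‖)
      = ∫ z in {z : EuclideanSpace ℝ (Fin d) | 4 * r ≤ ‖z‖}, j ‖z‖ := by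
    exact (measurePreserving_sub_right
        (volume : Measure (EuclideanSpace ℝ (Fin d))) x₀).setIntegral_preimage_emb
      (MeasurableEquiv.subRight x₀).measurableEmbedding (fun w => j ‖w‖)
      {w : EuclideanSpace ℝ (Fin d) | 4 * r ≤ ‖w‖}
  rw [htrans]
  have hℓr : 0 < ℓ r := hpos r ⟨hr0, by linarith⟩
  have hrα : (0:ℝ) < r ^ α := Real.rpow_pos_of_pos hr0 α
  set L : ℝ := ℓ r * r ^ (-α) with hLdef
  have hLc : c₀ ≤ L := by
    have h2 : c₀ * r^α ≤ ℓ r := hlow r hr0 hr4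
    rw [hLdef, Real.rpow_neg hr0.le]
    calc c₀ = c₀ * r^α * (r^α)⁻¹ := by field_simp
      _ ≤ ℓ r * (r^α)⁻¹ := mul_le_mul_of_nonneg_right h2 (by positivity)
  have hL0 : 0 < L := lt_of_lt_of_le hc₀ hLc
  have hgoal_eq : (C * K + (T + 1)/(ρ^2 * c₀) + 1) * ℓ r / r ^ α
      = (C * K) * L + ((T + 1)/(ρ^2 * c₀)) * L + L := by
    rw [hLdef, Real.rpow_neg hr0.le, div_eq_mul_inv]; ring
  rw [hgoal_eq]
  have htail_le : (ρ^2)⁻¹ * T ≤ ((T + 1)/(ρ^2 * c₀)) * L := by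
    have h1 : ((T + 1)/(ρ^2 * c₀)) * c₀ = (T+1) * (ρ^2)⁻¹ := by
      field_simp
    have h2 : ((T + 1)/(ρ^2 * c₀)) * c₀ ≤ ((T + 1)/(ρ^2 * c₀)) * L :=
      mul_le_mul_of_nonneg_left hLc (by positivity)
    have h3 : (ρ^2)⁻¹ * T ≤ (T+1) * (ρ^2)⁻¹ := by
      rw [mul_comm]
      exact mul_le_mul_of_nonneg_right (by linarith) (by positivity)
    linarith
  by_cases hcase : 4 * r ≤ ρ
  · -- split into annulus and tail
    set S1 : Set (EuclideanSpace ℝ (Fin d)) :=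
      {z | 4 * r ≤ ‖z‖} ∩ {z | ‖z‖ < ρ} with hS1def
    set S2 : Set (EuclideanSpace ℝ (Fin d)) := {z | ρ ≤ ‖z‖} with hS2def
    have hS1m : MeasurableSet S1 :=
      (measurableSet_le measurable_const measurable_norm).inter
        (measurableSet_lt measurable_norm measurable_const)
    have hS2m : MeasurableSet S2 := measurableSet_le measurable_const measurable_norm
    have hSeq : {z : EuclideanSpace ℝ (Fin d) | 4 * r ≤ ‖z‖} = S1 ∪ S2 := by
      ext z
      simp only [hS1def, hS2def, Set.mem_union, Set.mem_inter_iff, Set.mem_setOf_eq]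
      constructor
      · intro h
        rcases lt_or_ge ‖z‖ ρ with h2 | h2
        · exact Or.inl ⟨h, h2⟩
        · exact Or.inr h2
      · rintro (⟨h, _⟩ | h)
        · exact h
        · linarith
    have hdisj : Disjoint S1 S2 := by
      rw [Set.disjoint_left]
      rintro z ⟨_, h1⟩ h2
      simp only [Set.mem_setOf_eq] at h1
      simp only [hS2def, Set.mem_setOf_eq] at h2
      linarith
    set A : ℝ := C * ℓ r * r ^ (-(α/2)) with hAdef
    have hA0 : 0 ≤ A := by positivity
    have hpb : ∀ z ∈ S1, j ‖z‖ ≤ A * ‖z‖ ^ (-((d:ℝ) + α/2)) := by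
      rintro z ⟨hz1, hz2⟩
      simp only [Set.mem_setOf_eq] at hz1 hz2
      have hz0 : (0:ℝ) < ‖z‖ := lt_of_lt_of_le (by linarith) hz1
      have hJ := hJ1 ‖z‖ ⟨hz0, by linarith⟩
      have hpot' := hpot r ‖z‖ hr0 (by linarith) (le_of_lt hz2)
      have he : (‖z‖/r)^(α/2) * ‖z‖^(-(d:ℝ)-α) = r^(-(α/2)) * ‖z‖^(-((d:ℝ)+α/2)) := by
        rw [Real.div_rpow (norm_nonneg z) hr0.le, div_mul_eq_mul_div, ← Real.rpow_add hz0,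
          show α/2 + (-(d:ℝ)-α) = -((d:ℝ)+α/2) by ring, div_eq_mul_inv,
          ← Real.rpow_neg hr0.le]
        ring
      calc j ‖z‖ = ℓ ‖z‖ * ‖z‖ ^ (-(d:ℝ) - α) := hJ
        _ ≤ (C * (‖z‖/r)^(α/2) * ℓ r) * ‖z‖ ^ (-(d:ℝ) - α) :=
            mul_le_mul_of_nonneg_right hpot' (Real.rpow_nonneg (norm_nonneg z) _)
        _ = (C * ℓ r) * ((‖z‖/r)^(α/2) * ‖z‖ ^ (-(d:ℝ) - α)) := by ring
        _ = (C * ℓ r) * (r^(-(α/2)) * ‖z‖^(-((d:ℝ)+α/2))) := by rw [he]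
        _ = A * ‖z‖ ^ (-((d:ℝ) + α/2)) := by rw [hAdef]; ring
    have hf1S : IntegrableOn (fun z : EuclideanSpace ℝ (Fin d) => ‖z‖ ^ (-((d:ℝ) + α/2)))
        {z : EuclideanSpace ℝ (Fin d) | 4 * r ≤ ‖z‖} volume :=
      std_integrable d (α/2) (4*r) (by linarith) (by linarith)
    have hAf1 : IntegrableOn
        (fun z : EuclideanSpace ℝ (Fin d) => A * ‖z‖ ^ (-((d:ℝ) + α/2)))
        {z : EuclideanSpace ℝ (Fin d) | 4 * r ≤ ‖z‖} volume := hf1S.const_mul A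
    have hS1sub : S1 ⊆ {z : EuclideanSpace ℝ (Fin d) | 4 * r ≤ ‖z‖} :=
      Set.inter_subset_left
    have hjS1 : IntegrableOn (fun z : EuclideanSpace ℝ (Fin d) => j ‖z‖) S1 volume := by
      apply Integrable.mono' (hAf1.mono_set hS1sub) hjm.restrict
      rw [ae_restrict_iff' hS1m]
      apply Eventually.of_forall
      intro z hz
      have hz1 : 4 * r ≤ ‖z‖ := hz.1
      rw [Real.norm_eq_abs, abs_of_nonneg (hjnn _ (lt_of_lt_of_le (by linarith) hz1))]
      exact hpb z hz
    obtain ⟨hjS2, hS2b⟩ := tail_bound d j hjmeas hjnn hint ρ hρ0 (by linarith) S2 hS2m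
      (fun z hz => hz)
    have hsplit : ∫ z in {z : EuclideanSpace ℝ (Fin d) | 4 * r ≤ ‖z‖}, j ‖z‖
        = (∫ z in S1, j ‖z‖) + ∫ z in S2, j ‖z‖ := by
      rw [hSeq]
      exact setIntegral_union hdisj hS2m hjS1 hjS2
    have hS1b : (∫ z in S1, j ‖z‖) ≤ C * K * L := by
      have h4r : (4*r) ^ (-(α/2)) ≤ r ^ (-(α/2)) :=
        Real.rpow_le_rpow_of_nonpos hr0 (by linarith) (by linarith)
      have hrr : r ^ (-(α/2)) * r ^ (-(α/2)) = r ^ (-α) := by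
        rw [← Real.rpow_add hr0]; ring_nf
      calc (∫ z in S1, j ‖z‖)
          ≤ ∫ z in S1, A * ‖z‖ ^ (-((d:ℝ) + α/2)) :=
            setIntegral_mono_on hjS1 (hAf1.mono_set hS1sub) hS1m hpb
        _ ≤ ∫ z in {z : EuclideanSpace ℝ (Fin d) | 4 * r ≤ ‖z‖},
              A * ‖z‖ ^ (-((d:ℝ) + α/2)) :=
            setIntegral_mono_set hAf1
              (Eventually.of_forall fun z => by positivity)
              (HasSubset.Subset.eventuallyLE hS1sub)
        _ = A * ∫ z in {z : EuclideanSpace ℝ (Fin d) | 4 * r ≤ ‖z‖},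
              ‖z‖ ^ (-((d:ℝ) + α/2)) := integral_const_mul _ _
        _ = A * ((4*r) ^ (-(α/2)) * K) := by
            rw [std_scale d (α/2) (4*r) (by linarith) (by linarith)]
        _ ≤ A * (r ^ (-(α/2)) * K) :=
            mul_le_mul_of_nonneg_left (mul_le_mul_of_nonneg_right h4r hK0) hA0
        _ = C * K * L := by rw [hAdef, hLdef, ← hrr]; ring
    rw [hsplit]
    have hS2le : (∫ z in S2, j ‖z‖) ≤ ((T + 1)/(ρ^2 * c₀)) * L := le_trans hS2b htail_le
    linarith [hL0.le]
  · push_neg at hcase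
    obtain ⟨hjS, hSb⟩ := tail_bound d j hjmeas hjnn hint ρ hρ0 (by linarith)
      {z : EuclideanSpace ℝ (Fin d) | 4 * r ≤ ‖z‖} hSm
      (fun z hz => le_trans hcase.le hz)
    have h1 : (∫ z in {z : EuclideanSpace ℝ (Fin d) | 4 * r ≤ ‖z‖}, j ‖z‖)
        ≤ ((T + 1)/(ρ^2 * c₀)) * L := le_trans hSb htail_le
    have h2 : 0 ≤ C * K * L := mul_nonneg (mul_nonneg hC0.le hK0) hL0.le
    linarith [hL0.le]
end

section
/- Let d ≥ 1 and 0 < σ₁ ≤ σ₂, and let γ:(0,∞)→[0,∞) be measurable with limsup_{R→∞} R^{σ₁} ∫_{{|u| > R}} γ(|u|) du ≤ 1, liminf_{r→0+} r^{σ₂} ∫_{{|u| > r}} γ(|u|) du ≥ 1, and ∫_{{|u| > r}} γ(|u|) du > 0 for every r ∈ (0,1). Then there exists a constant c ≥ 1 such that for every x₀ ∈ ℝ^d and every r ∈ (0,1) there is j₀ ∈ ℕ such that for all integers j ≥ j₀ and all x ∈ B(x₀, r/2): ∫_{{z : |z - x₀| ≥ 2^j r}} γ(|z - x|) dz ≤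 c · 2^{-σ₁ j} · ∫_{{z : |z - x₀| ≥ r}} γ(|z - x₀|) dz. -/
/-!
Write `T R = ∫_{|u| > R} γ(|u|) du`. For `x ∈ B(x₀, r/2)` the region `|z - x₀| ≥ 2^j r` lies in
`|z - x| > 2^j r / 2`, so by translation invariance the left side is at most `T (2^j r / 2)`, which
the decay at infinity bounds by a multiple of `(2^j r)^{-σ₁}`. It remains to bound `r^{-σ₁}` by a
multiple of `T r`: for small `r` this is the lower bound `r^{σ₂} T r ≳ 1` together with `σ₁ ≤ σ₂`;
for `r` away from `0` it follows from `T r ≥ T 1`, unless `T 1 = 0`, in which case the left side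
vanishes for large `j`.
-/

open MeasureTheory Topology Filter Set

namespace TailComparison

variable {T : ℝ → ℝ} {σ₁ σ₂ A b δ r R : ℝ}

theorem le_mul_rpow_of_lower_bound (hb : 0 < b) (hA : 0 ≤ A) (hr : 0 < r) (hr1 : r ≤ 1)
    (hR : 0 < R) (hσ : σ₁ ≤ σ₂) (hupper : R ^ σ₁ * T R ≤ A) (hlower : b ≤ r ^ σ₂ * T r) :
    T R ≤ A / b * (r / R) ^ σ₁ * T r := by
  have hRσ : 0 < R ^ σ₁ := Real.rpow_pos_of_pos hR _
  have hTr : 0 ≤ T r := by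
    by_contra! h
    nlinarith [Real.rpow_pos_of_pos hr σ₂]
  have hrσ : r ^ σ₂ ≤ r ^ σ₁ := Real.rpow_le_rpow_of_exponent_ge hr hr1 hσ
  calc T R ≤ A / R ^ σ₁ := by rw [le_div_iff₀ hRσ]; linarith
    _ = A / b * b / R ^ σ₁ := by field_simp
    _ ≤ A / b * (r ^ σ₁ * T r) / R ^ σ₁ := by
        gcongr
        nlinarith
    _ = A / b * (r / R) ^ σ₁ * T r := by
        rw [Real.div_rpow hr.le hR.le]; ring

theorem le_mul_rpow_of_le_at_one (hA : 0 ≤ A) (hσ₁ : 0 ≤ σ₁) (hδ : 0 < δ) (hδr : δ ≤ r)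
    (hR : 0 < R) (hupper : R ^ σ₁ * T R ≤ A) (hT1 : 0 ≤ T 1) (hRT1 : T R ≤ T 1)
    (hT1r : T 1 ≤ T r) :
    T R ≤ A / (δ ^ σ₁ * T 1) * (r / R) ^ σ₁ * T r := by
  -- if `T 1 = 0` the constant is the junk value `A / 0 = 0`, but then `T R = 0` as well
  rcases hT1.eq_or_lt with h0 | hpos
  · rw [← h0] at hRT1 ⊢
    simpa using hRT1
  have hr : 0 < r := hδ.trans_le hδr
  have hRσ : 0 < R ^ σ₁ := Real.rpow_pos_of_pos hR _
  have hδσ : 0 < δ ^ σ₁ := Real.rpow_pos_of_pos hδ _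
  have hδrσ : δ ^ σ₁ ≤ r ^ σ₁ := Real.rpow_le_rpow hδ.le hδr hσ₁
  calc T R ≤ A / R ^ σ₁ := by rw [le_div_iff₀ hRσ]; linarith
    _ = A / (δ ^ σ₁ * T 1) * (δ ^ σ₁ * T 1) / R ^ σ₁ := by field_simp
    _ ≤ A / (δ ^ σ₁ * T 1) * (r ^ σ₁ * T r) / R ^ σ₁ := by gcongr
    _ = A / (δ ^ σ₁ * T 1) * (r / R) ^ σ₁ * T r := by
        rw [Real.div_rpow hr.le hR.le]; ring

theorem exists_le_mul_rpow_div (hT : AntitoneOn T (Ioi 0)) (hT0 : ∀ r > 0, 0 ≤ T r)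
    (hσ₁ : 0 ≤ σ₁) (hσ : σ₁ ≤ σ₂) (hb : 0 < b)
    (hupper : ∀ᶠ R in atTop, R ^ σ₁ * T R ≤ A) (hlower : ∀ᶠ r in 𝓝[>] 0, b ≤ r ^ σ₂ * T r) :
    ∃ R₁ K, ∀ r ∈ Ioo 0 1, ∀ R ≥ R₁, T R ≤ K * (r / R) ^ σ₁ * T r := by
  obtain ⟨R₀, hR₀⟩ := eventually_atTop.mp hupper
  obtain ⟨δ, hδ, hδlower⟩ := mem_nhdsGT_iff_exists_Ioo_subset.mp hlower
  have hA : 0 ≤ A := (mul_nonneg (Real.rpow_nonneg (by positivity) _)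
    (hT0 _ (by positivity))).trans (hR₀ (max R₀ 1) (le_max_left _ _))
  refine ⟨max R₀ 1, max (A / b) (A / (δ ^ σ₁ * T 1)), fun r ⟨hr, hr1⟩ R hR => ?_⟩
  have hR1 : 1 ≤ R := (le_max_right _ _).trans hR
  have hRpos : 0 < R := one_pos.trans_le hR1
  have hupperR := hR₀ R ((le_max_left _ _).trans hR)
  have hTr : 0 ≤ (r / R) ^ σ₁ * T r := mul_nonneg (by positivity) (hT0 r hr)
  rcases lt_or_ge r δ with hrδ | hδr
  · calc T R ≤ A / b * (r / R) ^ σ₁ * T r :=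
          le_mul_rpow_of_lower_bound hb hA hr hr1.le hRpos hσ hupperR (hδlower ⟨hr, hrδ⟩)
      _ ≤ _ := by rw [mul_assoc, mul_assoc]; gcongr; exact le_max_left _ _
  · calc T R ≤ A / (δ ^ σ₁ * T 1) * (r / R) ^ σ₁ * T r :=
          le_mul_rpow_of_le_at_one hA hσ₁ hδ hδr hRpos hupperR (hT0 1 one_pos)
            (hT (mem_Ioi.2 one_pos) hRpos hR1) (hT hr (mem_Ioi.2 one_pos) hr1.le)
      _ ≤ _ := by rw [mul_assoc, mul_assoc]; gcongr; exact le_max_right _ _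

end TailComparison

section RadialTail

variable {E : Type*} [NormedAddCommGroup E] [MeasurableSpace E] {μ : Measure E} {γ : ℝ → ℝ}

noncomputable def radialTail (μ : Measure E) (γ : ℝ → ℝ) (R : ℝ) : ℝ :=
  ∫ u in {u : E | R < ‖u‖}, γ ‖u‖ ∂μ

theorem integrableOn_of_radialTail_pos (hpos : ∀ r ∈ Ioo 0 1, 0 < radialTail μ γ r)
    {a : ℝ} (ha : 0 < a) {s : Set E} (hs : s ⊆ {u | a ≤ ‖u‖}) :
    IntegrableOn (fun u => γ ‖u‖) s μ := by
  set r := min (a / 2) (1 / 2)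
  have hr : r ∈ Ioo 0 1 := ⟨by positivity, (min_le_right _ _).trans_lt (by norm_num)⟩
  have hint : IntegrableOn (fun u => γ ‖u‖) {u : E | r < ‖u‖} μ :=
    Integrable.of_integral_ne_zero (hpos r hr).ne'
  exact hint.mono_set fun u hu => (min_le_left _ _).trans_lt ((half_lt_self ha).trans_le (hs hu))

variable [BorelSpace E]

theorem radialTail_nonneg (hγ : ∀ s > 0, 0 ≤ γ s) {R : ℝ} (hR : 0 ≤ R) :
    0 ≤ radialTail μ γ R :=
  setIntegral_nonneg (measurableSet_lt measurable_const measurable_norm)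
    fun _ hu => hγ _ (hR.trans_lt hu)

theorem radialTail_antitoneOn (hγ : ∀ s > 0, 0 ≤ γ s)
    (hpos : ∀ r ∈ Ioo 0 1, 0 < radialTail μ γ r) : AntitoneOn (radialTail μ γ) (Ioi 0) :=
  fun _ ha _ _ hab => setIntegral_mono_set
    (integrableOn_of_radialTail_pos hpos ha (Set.ofPred_subset_ofPred.2 fun _ => le_of_lt))
    (ae_restrict_of_forall_mem (measurableSet_lt measurable_const measurable_norm)
      fun _ hu => hγ _ (lt_trans ha hu))
    (LE.le.eventuallyLE (Set.ofPred_subset_ofPred.2 fun _ hu => hab.trans_lt hu))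

theorem radialTail_le_setIntegral (hγ : ∀ s > 0, 0 ≤ γ s)
    (hpos : ∀ r ∈ Ioo 0 1, 0 < radialTail μ γ r) {r : ℝ} (hr : 0 < r) :
    radialTail μ γ r ≤ ∫ u in {u : E | r ≤ ‖u‖}, γ ‖u‖ ∂μ :=
  setIntegral_mono_set (integrableOn_of_radialTail_pos hpos hr subset_rfl)
    (ae_restrict_of_forall_mem (measurableSet_le measurable_const measurable_norm)
      fun _ hu => hγ _ (hr.trans_le hu))
    (LE.le.eventuallyLE (Set.ofPred_subset_ofPred.2 fun _ hu => le_of_lt hu))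

variable [μ.IsAddRightInvariant]

theorem setIntegral_preimage_sub_right (g : E → ℝ) (s : Set E) (x : E) :
    ∫ z in (· - x) ⁻¹' s, g (z - x) ∂μ = ∫ u in s, g u ∂μ :=
  (measurePreserving_sub_right μ x).setIntegral_preimage_emb
    (MeasurableEquiv.subRight x).measurableEmbedding g s

theorem setIntegral_shell_le_radialTail (hγ : ∀ s > 0, 0 ≤ γ s)
    (hpos : ∀ r ∈ Ioo 0 1, 0 < radialTail μ γ r) {x₀ x : E} {r t : ℝ} (hr : 0 < r)
    (ht : 1 ≤ t) (hx : x ∈ Metric.ball x₀ (r / 2)) :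
    ∫ z in {z : E | t * r ≤ ‖z - x₀‖}, γ ‖z - x‖ ∂μ ≤ radialTail μ γ (t * r / 2) := by
  have hR : 0 < t * r / 2 := by positivity
  have hsub : {z : E | t * r ≤ ‖z - x₀‖} ⊆ (· - x) ⁻¹' {u | t * r / 2 < ‖u‖} := fun z hz => by
    have := norm_sub_le_norm_sub_add_norm_sub z x x₀
    have := mem_ball_iff_norm.mp hx
    show t * r / 2 < ‖z - x‖
    nlinarith [show t * r ≤ ‖z - x₀‖ from hz]
  have hint : IntegrableOn (fun z => γ ‖z - x‖) ((· - x) ⁻¹' {u : E | t * r / 2 < ‖u‖}) μ :=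
    ((measurePreserving_sub_right μ x).integrableOn_comp_preimage
      (MeasurableEquiv.subRight x).measurableEmbedding).mpr
      (integrableOn_of_radialTail_pos hpos hR (Set.ofPred_subset_ofPred.2 fun _ => le_of_lt))
  calc _ ≤ ∫ z in (· - x) ⁻¹' {u : E | t * r / 2 < ‖u‖}, γ ‖z - x‖ ∂μ :=
        setIntegral_mono_set hint
          (ae_restrict_of_forall_mem
            (measurable_sub_const x (measurableSet_lt measurable_const measurable_norm))
            fun _ hz => hγ _ (hR.trans hz))
          hsub.eventuallyLE
    _ = radialTail μ γ (t * r / 2) := setIntegral_preimage_sub_right (fun u => γ ‖u‖) _ x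

end RadialTail

theorem stmt_13_general (d : ℕ) (σ₁ σ₂ : ℝ) (hσ₁ : 0 < σ₁) (hσ : σ₁ ≤ σ₂)
    (γ : ℝ → ℝ) (hγnn : ∀ s : ℝ, 0 < s → 0 ≤ γ s)
    (hlimsup : ∀ ε > (0:ℝ), ∀ᶠ R in atTop,
      R ^ σ₁ * (∫ u in {u : EuclideanSpace ℝ (Fin d) | R < ‖u‖}, γ ‖u‖) ≤ 1 + ε)
    (hliminf : ∀ ε > (0:ℝ), ∀ᶠ r in 𝓝[>] (0:ℝ),
      1 - ε ≤ r ^ σ₂ * ∫ u in {u : EuclideanSpace ℝ (Fin d) | r < ‖u‖}, γ ‖u‖)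
    (hpos : ∀ r ∈ Set.Ioo (0:ℝ) 1,
      0 < ∫ u in {u : EuclideanSpace ℝ (Fin d) | r < ‖u‖}, γ ‖u‖) :
    ∃ c : ℝ, 1 ≤ c ∧ ∀ (x₀ : EuclideanSpace ℝ (Fin d)), ∀ r ∈ Set.Ioo (0:ℝ) 1,
      ∃ j₀ : ℕ, ∀ j : ℕ, j₀ ≤ j → ∀ x ∈ Metric.ball x₀ (r / 2),
        (∫ z in {z : EuclideanSpace ℝ (Fin d) | 2 ^ j * r ≤ ‖z - x₀‖}, γ ‖z - x‖) ≤
          c * (2:ℝ) ^ (-(σ₁ * j)) *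
            ∫ z in {z : EuclideanSpace ℝ (Fin d) | r ≤ ‖z - x₀‖}, γ ‖z - x₀‖ := by
  set T := radialTail (volume : Measure (EuclideanSpace ℝ (Fin d))) γ
  obtain ⟨R₁, K, hK⟩ := TailComparison.exists_le_mul_rpow_div (T := T)
    (radialTail_antitoneOn hγnn hpos) (fun r hr => radialTail_nonneg hγnn hr.le) hσ₁.le hσ
    (by norm_num) (hlimsup 1 one_pos) (hliminf (1 / 2) (by norm_num))
  refine ⟨max 1 (2 ^ σ₁ * K), le_max_left _ _, fun x₀ r ⟨hr, hr1⟩ => ?_⟩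
  obtain ⟨j₀, hj₀⟩ := eventually_atTop.mp
    ((tendsto_pow_atTop_atTop_of_one_lt one_lt_two).eventually_ge_atTop (2 * R₁ / r))
  refine ⟨j₀, fun j hj x hx => ?_⟩
  have h2j : (1 : ℝ) ≤ 2 ^ j := one_le_pow₀ one_le_two
  have hRj : R₁ ≤ 2 ^ j * r / 2 := by
    have := hj₀ j hj
    rw [div_le_iff₀ hr] at this
    linarith
  have hscale : (r / (2 ^ j * r / 2)) ^ σ₁ = 2 ^ σ₁ * (2 : ℝ) ^ (-(σ₁ * j)) := by
    rw [show r / (2 ^ j * r / 2) = 2 * ((2 : ℝ) ^ j)⁻¹ by field_simp,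
      Real.mul_rpow (by norm_num) (by positivity), Real.inv_rpow (by positivity),
      Real.rpow_neg (by norm_num), mul_comm σ₁, Real.rpow_mul (by norm_num), Real.rpow_natCast]
  have hcentered : ∫ z in {z | r ≤ ‖z - x₀‖}, γ ‖z - x₀‖ =
      ∫ u in {u : EuclideanSpace ℝ (Fin d) | r ≤ ‖u‖}, γ ‖u‖ :=
    setIntegral_preimage_sub_right (fun u => γ ‖u‖) {u | r ≤ ‖u‖} x₀
  rw [hcentered]
  have hTr : 0 ≤ (2 : ℝ) ^ (-(σ₁ * j)) * T r :=
    mul_nonneg (by positivity) (radialTail_nonneg hγnn hr.le)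
  calc _ ≤ T (2 ^ j * r / 2) := setIntegral_shell_le_radialTail hγnn hpos hr h2j hx
    _ ≤ K * (r / (2 ^ j * r / 2)) ^ σ₁ * T r := hK r ⟨hr, hr1⟩ _ hRj
    _ = 2 ^ σ₁ * K * ((2 : ℝ) ^ (-(σ₁ * j)) * T r) := by rw [hscale]; ring
    _ ≤ max 1 (2 ^ σ₁ * K) * ((2 : ℝ) ^ (-(σ₁ * j)) * T r) := by gcongr; exact le_max_right _ _
    _ ≤ _ := by
        rw [mul_assoc]
        gcongr
        exact radialTail_le_setIntegral hγnn hpos hr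

/-- Estimate (4.11): combining (4.9) and (4.10), there is `c ≥ 1` such that for every
`x₀` and `r ∈ (0,1)` there is `j₀` with, for all `j ≥ j₀` and `x ∈ B(x₀, r/2)`,
`∫_{|z-x₀| ≥ 2^j r} γ(|z-x|) dz ≤ c 2^{-σ₁ j} ∫_{|z-x₀| ≥ r} γ(|z-x₀|) dz`. -/
theorem stmt_13 (d : ℕ) (hd : 1 ≤ d) (σ₁ σ₂ : ℝ) (hσ₁ : 0 < σ₁) (hσ : σ₁ ≤ σ₂)
    (γ : ℝ → ℝ) (hγm : Measurable γ) (hγnn : ∀ s : ℝ, 0 < s → 0 ≤ γ s)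
    (hlimsup : ∀ ε > (0:ℝ), ∀ᶠ R in atTop,
      R ^ σ₁ * (∫ u in {u : EuclideanSpace ℝ (Fin d) | R < ‖u‖}, γ ‖u‖) ≤ 1 + ε)
    (hliminf : ∀ ε > (0:ℝ), ∀ᶠ r in 𝓝[>] (0:ℝ),
      1 - ε ≤ r ^ σ₂ * ∫ u in {u : EuclideanSpace ℝ (Fin d) | r < ‖u‖}, γ ‖u‖)
    (hpos : ∀ r ∈ Set.Ioo (0:ℝ) 1,
      0 < ∫ u in {u : EuclideanSpace ℝ (Fin d) | r < ‖u‖}, γ ‖u‖) :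
    ∃ c : ℝ, 1 ≤ c ∧ ∀ (x₀ : EuclideanSpace ℝ (Fin d)), ∀ r ∈ Set.Ioo (0:ℝ) 1,
      ∃ j₀ : ℕ, ∀ j : ℕ, j₀ ≤ j → ∀ x ∈ Metric.ball x₀ (r / 2),
        (∫ z in {z : EuclideanSpace ℝ (Fin d) | 2 ^ j * r ≤ ‖z - x₀‖}, γ ‖z - x‖) ≤
          c * (2:ℝ) ^ (-(σ₁ * j)) *
            ∫ z in {z : EuclideanSpace ℝ (Fin d) | r ≤ ‖z - x₀‖}, γ ‖z - x₀‖ :=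
  stmt_13_general d σ₁ σ₂ hσ₁ hσ γ hγnn hlimsup hliminf hpos
end

section
/- Let d ≥ 1, η ∈ S^{d-1}, θ ∈ (0, π/2], and set ρ = √(2(1 - cos θ)). Define the double cone V = { x ∈ ℝ^d : x ≠ 0 and x/|x| ∈ (B(η,ρ) ∪ B(-η,ρ)) ∩ S^{d-1} }. Let λ ∈ (0, sin θ / 8), x₀ ∈ ℝ^d, r ∈ (0,2), and let ξ ∈ {η, -η}; set x̃₀ = x₀ - (r/2) ξ. Then B(x̃₀, 2λr) ⊆ u + V for every u ∈ B(x₀, 2λr); that is, B(x̃₀, 2λr) is contained in the intersection over all u ∈ B(x₀, 2λr) of the translated cones u + V. -/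
open MeasureTheory Topology Filter RealInnerProductSpace

set_option maxHeartbeats 1000000

/-- Appendix fact (1): with `V` the double cone of aperture `ρ = √(2(1-cos θ))` around
`±η`, `λ ∈ (0, sin θ / 8)`, `ξ ∈ {η, -η}` and `x̃₀ = x₀ - (r/2) ξ`, one has
`B(x̃₀, 2λr) ⊆ u + V` for every `u ∈ B(x₀, 2λr)`. -/
theorem stmt_16 (d : ℕ) (hd : 1 ≤ d)
    (η : EuclideanSpace ℝ (Fin d)) (hη : ‖η‖ = 1)
    (θ : ℝ) (hθ : θ ∈ Set.Ioc (0:ℝ) (Real.pi / 2))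
    (ρ : ℝ) (hρ : ρ = Real.sqrt (2 * (1 - Real.cos θ)))
    (V : Set (EuclideanSpace ℝ (Fin d)))
    (hV : V = {x : EuclideanSpace ℝ (Fin d) | x ≠ 0 ∧
      ‖x‖⁻¹ • x ∈ (Metric.ball η ρ ∪ Metric.ball (-η) ρ) ∩ Metric.sphere 0 1})
    (lam : ℝ) (hlam : lam ∈ Set.Ioo (0:ℝ) (Real.sin θ / 8))
    (x₀ : EuclideanSpace ℝ (Fin d)) (r : ℝ) (hr : r ∈ Set.Ioo (0:ℝ) 2)
    (ξ : EuclideanSpace ℝ (Fin d)) (hξ : ξ = η ∨ ξ = -η) :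
    ∀ u ∈ Metric.ball x₀ (2 * lam * r),
      Metric.ball (x₀ - (r / 2) • ξ) (2 * lam * r) ⊆ (fun w => u + w) '' V := by
  obtain ⟨hθ0, hθ2⟩ := hθ
  obtain ⟨hlam0, hlam1⟩ := hlam
  obtain ⟨hr0, hr2⟩ := hr
  have hpi := Real.pi_pos
  have hsin : 0 < Real.sin θ := Real.sin_pos_of_pos_of_lt_pi hθ0 (by linarith)
  have hsin1 : Real.sin θ ≤ 1 := Real.sin_le_one θ
  have hcos0 : 0 ≤ Real.cos θ := Real.cos_nonneg_of_mem_Icc ⟨by linarith, hθ2⟩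
  have hcos1 : Real.cos θ < 1 := by
    nlinarith [Real.sin_sq_add_cos_sq θ]
  have hξ1 : ‖ξ‖ = 1 := by rcases hξ with h | h <;> simp [h, hη]
  have hρ0 : 0 ≤ ρ := hρ ▸ Real.sqrt_nonneg _
  have hρ2 : ρ ^ 2 = 2 * (1 - Real.cos θ) := by
    rw [hρ, sq, Real.mul_self_sqrt (by nlinarith)]
  intro u hu y hy
  rw [Metric.mem_ball, dist_eq_norm] at hy
  rw [Metric.mem_ball, dist_eq_norm] at hu
  set a : ℝ := r / 2 with ha_def
  have ha : 0 < a := by simp [ha_def]; linarith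
  set e : EuclideanSpace ℝ (Fin d) := (y - (x₀ - (r / 2) • ξ)) + (x₀ - u) with he_def
  have hx : y - u = e - a • ξ := by
    rw [he_def, ha_def]; module
  have he : ‖e‖ < Real.sin θ * a := by
    have h1 : ‖e‖ ≤ ‖y - (x₀ - (r / 2) • ξ)‖ + ‖x₀ - u‖ := norm_add_le _ _
    have h2 : ‖x₀ - u‖ = ‖u - x₀‖ := by rw [norm_sub_rev]
    have : (4 : ℝ) * lam * r < Real.sin θ * a := by
      rw [ha_def]; nlinarith
    linarith
  set t : ℝ := ⟪e, ξ⟫ with ht_def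
  have ht : t ≤ ‖e‖ := by
    calc t ≤ ‖e‖ * ‖ξ‖ := real_inner_le_norm e ξ
    _ = ‖e‖ := by rw [hξ1, mul_one]
  have hp : 0 < a - t := by nlinarith
  set s : ℝ := ‖e - t • ξ‖ with hs_def
  have hs0 : 0 ≤ s := norm_nonneg _
  have hξξ : ⟪ξ, ξ⟫ = 1 := by
    rw [real_inner_self_eq_norm_sq, hξ1]; norm_num
  have hst : s ^ 2 = ‖e‖ ^ 2 - t ^ 2 := by
    have := norm_sub_sq_real e (t • ξ)
    rw [real_inner_smul_right, norm_smul, hξ1] at this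
    rw [Real.norm_eq_abs] at this
    simp only [← ht_def, mul_one] at this
    rw [hs_def, this, sq_abs]; ring
  set x : EuclideanSpace ℝ (Fin d) := e - a • ξ with hx_def
  have hxξ : ⟪x, ξ⟫ = t - a := by
    rw [hx_def, inner_sub_left, real_inner_smul_left, hξξ, ← ht_def]; ring
  have hxn : ‖x‖ ^ 2 = s ^ 2 + (a - t) ^ 2 := by
    have := norm_sub_sq_real e (a • ξ)
    rw [real_inner_smul_right, norm_smul, hξ1] at this
    rw [Real.norm_eq_abs] at this
    simp only [← ht_def, mul_one] at this
    rw [hx_def, this, sq_abs, hst]; ring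
  have hxpos : 0 < ‖x‖ := by
    have h2 : 0 < ‖x‖ ^ 2 := by rw [hxn]; nlinarith
    by_contra h
    push_neg at h
    have h0 : ‖x‖ = 0 := le_antisymm h (norm_nonneg x)
    rw [h0] at h2; norm_num at h2
  have hCS : t * Real.sin θ + s * Real.cos θ ≤ ‖e‖ := by
    nlinarith [sq_nonneg (t * Real.cos θ - s * Real.sin θ),
      Real.sin_sq_add_cos_sq θ, norm_nonneg e,
      sq_nonneg (t * Real.sin θ + s * Real.cos θ - ‖e‖),
      sq_nonneg (t * Real.sin θ + s * Real.cos θ + ‖e‖)]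
  have key : s * Real.cos θ < (a - t) * Real.sin θ := by nlinarith
  have hkey2 : Real.cos θ * ‖x‖ < a - t := by
    nlinarith [mul_nonneg hcos0 (norm_nonneg x), mul_nonneg hs0 hcos0,
      Real.sin_sq_add_cos_sq θ, sq_nonneg ((a - t) * Real.sin θ)]
  have hxne : x ≠ 0 := by
    intro h
    rw [h, norm_zero] at hxpos; exact lt_irrefl 0 hxpos
  set v : EuclideanSpace ℝ (Fin d) := ‖x‖⁻¹ • x with hv_def
  have hvnorm : ‖v‖ = 1 := by
    rw [hv_def, norm_smul, norm_inv, norm_norm, inv_mul_cancel₀ (ne_of_gt hxpos)]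
  have hvξ : ⟪v, ξ⟫ = ‖x‖⁻¹ * (t - a) := by
    rw [hv_def, real_inner_smul_left, hxξ]
  have hdist : ‖v + ξ‖ < ρ := by
    have hsq : ‖v + ξ‖ ^ 2 = 2 - 2 * ((a - t) / ‖x‖) := by
      have := norm_add_sq_real v ξ
      rw [hvnorm, hξ1, hvξ] at this
      rw [this]
      field_simp
      ring
    have hlt : (a - t) / ‖x‖ > Real.cos θ := by
      rw [gt_iff_lt, lt_div_iff₀ hxpos]; linarith
    have h2 : ‖v + ξ‖ ^ 2 < ρ ^ 2 := by rw [hsq, hρ2]; linarith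
    nlinarith [norm_nonneg (v + ξ)]
  refine ⟨y - u, ?_, by show u + (y - u) = y; abel⟩
  rw [hV, hx]
  refine ⟨hxne, ?_, ?_⟩
  · have hball : v ∈ Metric.ball (-ξ) ρ := by
      rw [Metric.mem_ball, dist_eq_norm, sub_neg_eq_add]; exact hdist
    rcases hξ with h | h
    · right; rw [h] at hball; exact hball
    · left; rw [h, neg_neg] at hball; exact hball
  · rw [mem_sphere_zero_iff_norm]; exact hvnorm
end

section
/- Let d ≥ 1, δ > 0, and let k: S^{d-1} → [0,∞) be measurable and bounded with k(ξ) = k(-ξ) for all ξ, and suppose there is a nonempty open subset I ⊆ S^{d-1} with k(ξ) ≥ δ for all ξ ∈ I. Let γ:(0,∞)→[0,∞) be measurable with ∫_{{|z| > s}} γ(|z|) dz < ∞ for every s > 0, and let m: ℝ^d × (ℝ^d \ {0}) → [0,∞) be measurable with k(h/|h|) γ(|h|) ≤ m(x,h) ≤ γ(|h|) for all x ∈ ℝ^d and h ≠ 0. Then there is a constant c > 0 (depending only on d, δ and I) such that for every x₀ ∈ ℝ^d and every r > 0: ∫_{{z : |z - x₀| ≥ r}} m(x₀, z - x₀) dz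 ≥ c ∫_{{z : |z| ≥ r}} γ(|z|) dz. -/
/-!
The polar-coordinate homeomorphism `x ↦ (x / ‖x‖, ‖x‖)` carries an additive Haar measure to the
product of its surface measure `σ` on the unit sphere and a radial measure. Hence the integral of
a radial function over the cone spanned by a subset `J` of the sphere is the fraction
`σ J / σ univ` of its integral over the whole space. On the cone spanned by `I` we have
`m(x₀, h) ≥ δ γ(‖h‖)`, and `σ I > 0` because `I` is nonempty and open in the sphere, so after
translating `x₀` to the origin the theorem holds with `c = δ σ I / σ univ`.
-/

open Set Metric
open scoped ENNReal

namespace MeasureTheory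

variable {E : Type*} [NormedAddCommGroup E] [NormedSpace ℝ E]

def sphereCone (J : Set E) : Set E := {0}ᶜ ∩ (fun x : E => ‖x‖⁻¹ • x) ⁻¹' J

lemma sphereCone_eq_image_preimage_homeomorphUnitSphereProd (J : Set E) :
    sphereCone J = (↑) '' (homeomorphUnitSphereProd E ⁻¹'
      (((↑) ⁻¹' J : Set (sphere (0 : E) 1)) ×ˢ univ)) := by
  ext x
  constructor
  · rintro ⟨hx, hJ⟩
    exact ⟨⟨x, hx⟩, by simpa using hJ, rfl⟩
  · rintro ⟨x, hx, rfl⟩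
    exact ⟨x.2, by simpa using hx⟩

variable [MeasurableSpace E] [BorelSpace E] [FiniteDimensional ℝ E] (μ : Measure E)
  [μ.IsAddHaarMeasure]

theorem setLIntegral_sphereCone_fun_norm (J : Set E) {f : ℝ → ℝ≥0∞} (hf : Measurable f) :
    ∫⁻ x in sphereCone J, f ‖x‖ ∂μ =
      μ.toSphere ((↑) ⁻¹' J) * ∫⁻ t, f t ∂(Measure.volumeIoiPow (Module.finrank ℝ E - 1)) := by
  rw [sphereCone_eq_image_preimage_homeomorphUnitSphereProd,
    ← setLIntegral_subtype (measurableSet_singleton 0).compl]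
  calc _ = ∫⁻ x in homeomorphUnitSphereProd E ⁻¹' (((↑) ⁻¹' J) ×ˢ univ),
          f (homeomorphUnitSphereProd E x).2 ∂μ.comap (↑) := by
        simp only [homeomorphUnitSphereProd_apply_snd_coe]
    _ = ∫⁻ p in ((↑) ⁻¹' J) ×ˢ univ, f p.2 ∂(μ.toSphere.prod
          (Measure.volumeIoiPow (Module.finrank ℝ E - 1))) :=
        μ.measurePreserving_homeomorphUnitSphereProd.setLIntegral_comp_preimage_emb
          (Homeomorph.measurableEmbedding _) (fun p => f p.2) _
    _ = _ := by
      rw [← Measure.prod_restrict, Measure.restrict_univ,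
        ← lintegral_map (f := fun t : Ioi (0 : ℝ) => f t) (hf.comp measurable_subtype_coe)
          measurable_snd, Measure.map_snd_prod,
        lintegral_smul_measure, Measure.restrict_apply_univ, smul_eq_mul]

theorem toSphere_univ_mul_setLIntegral_sphereCone_fun_norm (J : Set E) {s : Set ℝ}
    (hs : MeasurableSet s) (hs₀ : 0 ∉ s) {f : ℝ → ℝ≥0∞} (hf : Measurable f) :
    μ.toSphere univ * ∫⁻ x in sphereCone J ∩ (‖·‖) ⁻¹' s, f ‖x‖ ∂μ =
      μ.toSphere ((↑) ⁻¹' J) * ∫⁻ x in (‖·‖) ⁻¹' s, f ‖x‖ ∂μ := by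
  have hcone : (‖·‖) ⁻¹' s = sphereCone (univ : Set E) ∩ (‖·‖) ⁻¹' s := by
    ext x
    refine ⟨fun hx => ⟨⟨fun h0 => hs₀ ?_, trivial⟩, hx⟩, fun hx => hx.2⟩
    simpa [show x = 0 from h0] using hx
  have hrad (K : Set E) : ∫⁻ x in sphereCone K ∩ (‖·‖) ⁻¹' s, f ‖x‖ ∂μ =
      μ.toSphere ((↑) ⁻¹' K) * ∫⁻ t, s.indicator f t
        ∂(Measure.volumeIoiPow (Module.finrank ℝ E - 1)) := by
    rw [← setLIntegral_sphereCone_fun_norm μ K (hf.indicator hs), inter_comm,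
      ← setLIntegral_indicator (measurable_norm hs)]
    rfl
  rw [hrad, hcone, hrad, preimage_univ, mul_left_comm]

theorem mul_toSphere_mul_setLIntegral_fun_norm_le (J : Set E) {s : Set ℝ} (hs : MeasurableSet s)
    (hs₀ : 0 ∉ s) {f : ℝ → ℝ≥0∞} (hf : Measurable f) {g : E → ℝ≥0∞} (hg : Measurable g)
    (a : ℝ≥0∞) (hfg : ∀ x ∈ sphereCone J, ‖x‖ ∈ s → a * f ‖x‖ ≤ g x) :
    a * μ.toSphere ((↑) ⁻¹' J) * ∫⁻ x in (‖·‖) ⁻¹' s, f ‖x‖ ∂μ ≤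
      μ.toSphere univ * ∫⁻ x in (‖·‖) ⁻¹' s, g x ∂μ :=
  calc _ = μ.toSphere ((↑) ⁻¹' J) * ∫⁻ x in (‖·‖) ⁻¹' s, a * f ‖x‖ ∂μ := by
        rw [lintegral_const_mul (f := fun x => f ‖x‖) _ (hf.comp measurable_norm)]
        ring
    _ = μ.toSphere univ * ∫⁻ x in sphereCone J ∩ (‖·‖) ⁻¹' s, a * f ‖x‖ ∂μ :=
        (toSphere_univ_mul_setLIntegral_sphereCone_fun_norm μ J hs hs₀
          (measurable_const.mul hf)).symm
    _ ≤ μ.toSphere univ * ∫⁻ x in sphereCone J ∩ (‖·‖) ⁻¹' s, g x ∂μ := by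
        gcongr _ * ?_
        exact setLIntegral_mono hg fun x hx => hfg x hx.1 hx.2
    _ ≤ μ.toSphere univ * ∫⁻ x in (‖·‖) ⁻¹' s, g x ∂μ := by
        gcongr
        exact inter_subset_right

theorem mul_toSphere_div_mul_setIntegral_fun_norm_le (J : Set E) {s : Set ℝ}
    (hs : MeasurableSet s) (hs₀ : 0 ∉ s) {f : ℝ → ℝ} (hf : Measurable f)
    (hf₀ : ∀ t ∈ s, 0 ≤ f t) {g : E → ℝ} (hg : Measurable g)
    (hg_int : IntegrableOn g ((‖·‖) ⁻¹' s) μ) (hg₀ : ∀ x, ‖x‖ ∈ s → 0 ≤ g x) {a : ℝ}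
    (ha : 0 ≤ a) (hfg : ∀ x ∈ sphereCone J, ‖x‖ ∈ s → a * f ‖x‖ ≤ g x) :
    a * (μ.toSphere ((↑) ⁻¹' J)).toReal / (μ.toSphere univ).toReal *
        ∫ x in (‖·‖) ⁻¹' s, f ‖x‖ ∂μ ≤ ∫ x in (‖·‖) ⁻¹' s, g x ∂μ := by
  have hS : MeasurableSet ((‖·‖) ⁻¹' s : Set E) := measurable_norm hs
  have hkey := mul_toSphere_mul_setLIntegral_fun_norm_le μ J hs hs₀
    (f := fun t => ENNReal.ofReal (f t)) (ENNReal.measurable_ofReal.comp hf)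
    (g := fun x => ENNReal.ofReal (g x)) (ENNReal.measurable_ofReal.comp hg) (ENNReal.ofReal a)
    fun x hx hxs => by
      rw [← ENNReal.ofReal_mul ha]
      exact ENNReal.ofReal_le_ofReal (hfg x hx hxs)
  rw [integral_eq_lintegral_of_nonneg_ae (ae_restrict_of_forall_mem hS fun x hx => hf₀ _ hx)
      (hf.comp measurable_norm).aestronglyMeasurable,
    integral_eq_lintegral_of_nonneg_ae (ae_restrict_of_forall_mem hS hg₀) hg.aestronglyMeasurable,
    div_mul_eq_mul_div]
  refine div_le_of_le_mul₀ ENNReal.toReal_nonneg ENNReal.toReal_nonneg ?_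
  rw [mul_comm _ (μ.toSphere univ).toReal]
  simpa only [ENNReal.toReal_mul, ENNReal.toReal_ofReal ha] using
    ENNReal.toReal_mono (ENNReal.mul_ne_top (measure_ne_top _ _) hg_int.lintegral_lt_top.ne) hkey

end MeasureTheory

open MeasureTheory Topology Filter

theorem stmt_18_general (d : ℕ) (δ : ℝ) (hδ : 0 < δ)
    (I : Set (EuclideanSpace ℝ (Fin d))) (hIne : I.Nonempty)
    (hIopen : ∃ U : Set (EuclideanSpace ℝ (Fin d)), IsOpen U ∧
      I = U ∩ Metric.sphere (0 : EuclideanSpace ℝ (Fin d)) 1) :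
    ∃ c : ℝ, 0 < c ∧
      ∀ k : EuclideanSpace ℝ (Fin d) → ℝ, Measurable k →
        (∀ ξ : EuclideanSpace ℝ (Fin d), ‖ξ‖ = 1 → 0 ≤ k ξ) →
        (∃ M : ℝ, ∀ ξ : EuclideanSpace ℝ (Fin d), ‖ξ‖ = 1 → k ξ ≤ M) →
        (∀ ξ : EuclideanSpace ℝ (Fin d), ‖ξ‖ = 1 → k (-ξ) = k ξ) →
        (∀ ξ ∈ I, δ ≤ k ξ) →
        ∀ γ : ℝ → ℝ, Measurable γ → (∀ s : ℝ, 0 < s → 0 ≤ γ s) →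
          (∀ s : ℝ, 0 < s → IntegrableOn (fun z : EuclideanSpace ℝ (Fin d) => γ ‖z‖)
            {z : EuclideanSpace ℝ (Fin d) | s < ‖z‖}) →
          ∀ m : EuclideanSpace ℝ (Fin d) → EuclideanSpace ℝ (Fin d) → ℝ,
            Measurable (Function.uncurry m) →
            (∀ (x h : EuclideanSpace ℝ (Fin d)), h ≠ 0 →
              k (‖h‖⁻¹ • h) * γ ‖h‖ ≤ m x h ∧ m x h ≤ γ ‖h‖) →
            ∀ (x₀ : EuclideanSpace ℝ (Fin d)) (r : ℝ), 0 < r →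
              c * (∫ z in {z : EuclideanSpace ℝ (Fin d) | r ≤ ‖z‖}, γ ‖z‖) ≤
                ∫ z in {z : EuclideanSpace ℝ (Fin d) | r ≤ ‖z - x₀‖}, m x₀ (z - x₀) := by
  obtain ⟨U, hU, rfl⟩ := hIopen
  obtain ⟨ξ, hξU, hξ⟩ := hIne
  have hσU : 0 < volume.toSphere ((↑) ⁻¹' U : Set (sphere (0 : EuclideanSpace ℝ (Fin d)) 1)) :=
    (hU.preimage continuous_subtype_val).measure_pos _ ⟨⟨ξ, hξ⟩, hξU⟩
  have hσ := hσU.trans_le (measure_mono (subset_univ _))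
  refine ⟨_, div_pos (mul_pos hδ (ENNReal.toReal_pos hσU.ne' (measure_ne_top _ _)))
    (ENNReal.toReal_pos hσ.ne' (measure_ne_top _ _)), ?_⟩
  intro k _ hk0 _ _ hkδ γ hγ hγ0 hγint m hm hmk x₀ r hr
  have hmx : Measurable (m x₀) := hm.of_uncurry_left
  have hm₀ (z : EuclideanSpace ℝ (Fin d)) (hz : r ≤ ‖z‖) : 0 ≤ m x₀ z := by
    have hz₀ : z ≠ 0 := norm_pos_iff.1 (hr.trans_le hz)
    exact (mul_nonneg (hk0 _ (norm_smul_inv_norm hz₀)) (hγ0 _ (hr.trans_le hz))).trans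
      (hmk x₀ z hz₀).1
  have hm_int : IntegrableOn (m x₀) {z | r ≤ ‖z‖} := by
    refine Integrable.mono' ((hγint (r / 2) (half_pos hr)).mono_set
      fun z hz => (half_lt_self hr).trans_le hz) hmx.aestronglyMeasurable
      (ae_restrict_of_forall_mem (measurable_norm measurableSet_Ici) fun z hz => ?_)
    rw [Real.norm_eq_abs, abs_of_nonneg (hm₀ z hz)]
    exact (hmk x₀ z (norm_pos_iff.1 (hr.trans_le hz))).2
  refine le_of_le_of_eq ?_ ((measurePreserving_sub_right volume x₀).setIntegral_preimage_emb
    (measurableEmbedding_subRight x₀) (m x₀) {z | r ≤ ‖z‖}).symm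
  refine mul_toSphere_div_mul_setIntegral_fun_norm_le volume U measurableSet_Ici
    (by simpa using hr) hγ (fun t ht => hγ0 t (hr.trans_le ht)) hmx hm_int hm₀ hδ.le
    fun z hz hzr => ?_
  have hzI : ‖z‖⁻¹ • z ∈ U ∩ sphere 0 1 :=
    ⟨hz.2, mem_sphere_zero_iff_norm.2 (norm_smul_inv_norm hz.1)⟩
  exact (mul_le_mul_of_nonneg_right (hkδ _ hzI) (hγ0 _ (hr.trans_le hzr))).trans
    (hmk x₀ z hz.1).1

/-- Lower bound used in the proof of Theorem 4.1: if `k` is bounded, symmetric,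
measurable on the sphere and `k ≥ δ` on a nonempty relatively open subset `I` of the
sphere, and `k(h/|h|) γ(|h|) ≤ m(x,h) ≤ γ(|h|)`, then there is `c > 0` depending only on
`d`, `δ` and `I` with `∫_{|z-x₀| ≥ r} m(x₀, z-x₀) dz ≥ c ∫_{|z| ≥ r} γ(|z|) dz`. -/
theorem stmt_18 (d : ℕ) (hd : 1 ≤ d) (δ : ℝ) (hδ : 0 < δ)
    (I : Set (EuclideanSpace ℝ (Fin d))) (hIne : I.Nonempty)
    (hIsub : I ⊆ Metric.sphere (0 : EuclideanSpace ℝ (Fin d)) 1)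
    (hIopen : ∃ U : Set (EuclideanSpace ℝ (Fin d)), IsOpen U ∧
      I = U ∩ Metric.sphere (0 : EuclideanSpace ℝ (Fin d)) 1) :
    ∃ c : ℝ, 0 < c ∧
      ∀ k : EuclideanSpace ℝ (Fin d) → ℝ, Measurable k →
        (∀ ξ : EuclideanSpace ℝ (Fin d), ‖ξ‖ = 1 → 0 ≤ k ξ) →
        (∃ M : ℝ, ∀ ξ : EuclideanSpace ℝ (Fin d), ‖ξ‖ = 1 → k ξ ≤ M) →
        (∀ ξ : EuclideanSpace ℝ (Fin d), ‖ξ‖ = 1 → k (-ξ) = k ξ) →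
        (∀ ξ ∈ I, δ ≤ k ξ) →
        ∀ γ : ℝ → ℝ, Measurable γ → (∀ s : ℝ, 0 < s → 0 ≤ γ s) →
          (∀ s : ℝ, 0 < s → IntegrableOn (fun z : EuclideanSpace ℝ (Fin d) => γ ‖z‖)
            {z : EuclideanSpace ℝ (Fin d) | s < ‖z‖}) →
          ∀ m : EuclideanSpace ℝ (Fin d) → EuclideanSpace ℝ (Fin d) → ℝ,
            Measurable (Function.uncurry m) →
            (∀ (x h : EuclideanSpace ℝ (Fin d)), h ≠ 0 →
              k (‖h‖⁻¹ • h) * γ ‖h‖ ≤ m x h ∧ m x h ≤ γ ‖h‖) →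
            ∀ (x₀ : EuclideanSpace ℝ (Fin d)) (r : ℝ), 0 < r →
              c * (∫ z in {z : EuclideanSpace ℝ (Fin d) | r ≤ ‖z‖}, γ ‖z‖) ≤
                ∫ z in {z : EuclideanSpace ℝ (Fin d) | r ≤ ‖z - x₀‖}, m x₀ (z - x₀) :=
  stmt_18_general d δ hδ I hIne hIopen
end
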